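/- arXiv:2407.06719 — 2 statements merged into one kernel-verified Lean document; each statement's English description precedes it below -/
import Mathlib

section
/- (a) There are exactly two Borel clones whose finitary restriction is the set of all finitary self-dual Boolean functions: all Borel self-dual functions (arities 1 ≤ n ≤ ω), and all continuous self-dual functions. (b) There are exactly three Borel clones whose finitary restriction is the set of all finitary self-dual f with f(0⃗) = 0: all Borel self-dual f with f(0⃗) = 0; all Borel self-dual f vanishing on a neighborhood of 0⃗; and all continuous self-dual f with f(0⃗) = 0. -/
open scoped Classical

/-- An arity: `some n` is the finite arity `n ≥ 1`; `none` is the countably infinite arity ω. -/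
abbrev Arity := Option ℕ+

/-- The index set of an arity. -/
abbrev Idx : Arity → Type
  | some n => Fin (n : ℕ)
  | none => ℕ

/-- A Boolean function of some arity `1 ≤ n ≤ ω`.  The input space `Idx a → Bool`
carries the product topology (with `Bool` discrete), the product σ-algebra (= Borel),
and the coordinatewise partial order. -/
abbrev BFun : Type := Σ a : Arity, (Idx a → Bool) → Bool

/-- A clone: a set of Boolean functions of arities `1 ≤ n ≤ ω` containing all projections
and closed under composition. -/
structure IsClone (F : Set BFun) : Prop where
  proj : ∀ (a : Arity) (i : Idx a), (⟨a, fun x => x i⟩ : BFun) ∈ F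
  comp : ∀ (a b : Arity) (g : (Idx a → Bool) → Bool) (f : Idx a → (Idx b → Bool) → Bool),
      (⟨a, g⟩ : BFun) ∈ F → (∀ i, (⟨b, f i⟩ : BFun) ∈ F) →
      (⟨b, fun x => g fun i => f i x⟩ : BFun) ∈ F

/-- The clone generated by a set of Boolean functions. -/
def cloneGen (G : Set BFun) : Set BFun := ⋂₀ {F : Set BFun | IsClone F ∧ G ⊆ F}

/-- `f` has finite arity. -/
def finitary (f : BFun) : Prop := f.1 ≠ none

/-- `f` is Borel: the preimage of `1` is a Borel set. -/
def IsBorelFun (f : BFun) : Prop := MeasurableSet {x | f.2 x = true}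

/-- `f` is continuous (equivalently, depends on only finitely many coordinates). -/
def IsContFun (f : BFun) : Prop := Continuous f.2

/-- `f(0⃗) = 0`. -/
def PresBot (f : BFun) : Prop := f.2 (fun _ => false) = false

/-- `f(1⃗) = 1`. -/
def PresTop (f : BFun) : Prop := f.2 (fun _ => true) = true

/-- `f` vanishes on a neighborhood of `0⃗`, i.e. `0⃗` is not in the closure of `f⁻¹(1)`. -/
def VanishNearBot (f : BFun) : Prop := (fun _ => false) ∉ closure {x | f.2 x = true}

/-- `f` equals `1` on a neighborhood of `1⃗`, i.e. `1⃗` is not in the closure of `f⁻¹(0)`. -/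
def OneNearTop (f : BFun) : Prop := (fun _ => true) ∉ closure {x | f.2 x = false}

/-- Countably infinite disjunction `⋁ : 2^ω → 2`. -/
noncomputable def bigOr : (ℕ → Bool) → Bool := fun x => decide (∃ i, x i = true)

/-- Countably infinite conjunction `⋀ : 2^ω → 2`. -/
noncomputable def bigAnd : (ℕ → Bool) → Bool := fun x => decide (∀ i, x i = true)

/-- `liminf : 2^ω → 2`, equal to `1` iff all but finitely many bits are `1`. -/
noncomputable def liminfF : (ℕ → Bool) → Bool := fun x => decide (∃ N, ∀ j, N ≤ j → x j = true)

/-- `f` is self-dual: `f(¬x⃗) = ¬f(x⃗)`. -/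
def SelfDual (f : BFun) : Prop := ∀ x, f.2 (fun i => !(x i)) = !(f.2 x)

def BorelClass : Set BFun := {f | IsBorelFun f}

def finRes (F : Set BFun) : Set BFun := {f ∈ F | finitary f}

def D1 : Set BFun := {f | IsBorelFun f ∧ SelfDual f}
def D2 : Set BFun := {f | IsContFun f ∧ SelfDual f}
def DT1 : Set BFun := {f | IsBorelFun f ∧ SelfDual f ∧ PresBot f}
def DT2 : Set BFun := {f | IsBorelFun f ∧ SelfDual f ∧ VanishNearBot f}
def DT3 : Set BFun := {f | IsContFun f ∧ SelfDual f ∧ PresBot f}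




lemma notMem_closure_iff {ι : Type} (S : Set (ι → Bool)) (z : ι → Bool) :
    z ∉ closure S ↔ ∃ I : Finset ι, ∀ x ∈ S, ∃ i ∈ I, x i ≠ z i := by
  constructor
  · intro h
    have ho : IsOpen (closure S)ᶜ := isOpen_compl_iff.2 isClosed_closure
    rw [isOpen_pi_iff] at ho
    obtain ⟨I, u, hIu, hsub⟩ := ho z h
    refine ⟨I, fun x hx => ?_⟩
    by_contra hc
    push_neg at hc
    have hxm : x ∈ (↑I : Set ι).pi u := fun i hi => (hc i hi) ▸ (hIu i hi).2
    exact (hsub hxm) (subset_closure hx)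
  · rintro ⟨I, hI⟩ hz
    have ho : IsOpen {x : ι → Bool | ∀ i ∈ I, x i = z i} := by
      have he : {x : ι → Bool | ∀ i ∈ I, x i = z i} = (↑I : Set ι).pi (fun i => {z i}) := by
        ext x; simp [Set.mem_pi]
      rw [he]
      exact isOpen_set_pi I.finite_toSet (fun i _ => isOpen_discrete _)
    obtain ⟨x, hx1, hx2⟩ := mem_closure_iff.1 hz _ ho (fun i _ => rfl)
    obtain ⟨i, hi, hne⟩ := hI x hx2
    exact hne (hx1 i hi)

lemma notMem_closure_iff_nat (S : Set (ℕ → Bool)) (z : ℕ → Bool) :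
    z ∉ closure S ↔ ∃ N : ℕ, ∀ x ∈ S, ∃ i, i < N ∧ x i ≠ z i := by
  rw [notMem_closure_iff]
  constructor
  · rintro ⟨I, hI⟩
    refine ⟨(I.sup id) + 1, fun x hx => ?_⟩
    obtain ⟨i, hi, hne⟩ := hI x hx
    exact ⟨i, Nat.lt_succ_of_le (Finset.le_sup (f := id) hi), hne⟩
  · rintro ⟨N, hN⟩
    refine ⟨Finset.range N, fun x hx => ?_⟩
    obtain ⟨i, hi, hne⟩ := hN x hx
    exact ⟨i, Finset.mem_range.2 hi, hne⟩

lemma fin_all_measurable {n : ℕ} (s : Set (Fin n → Bool)) : MeasurableSet s :=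
  s.to_countable.measurableSet

lemma fin_all_continuous {n : ℕ} (f : (Fin n → Bool) → Bool) : Continuous f :=
  continuous_of_discreteTopology

lemma fin_closure_eq {n : ℕ} (s : Set (Fin n → Bool)) : closure s = s :=
  (isClosed_discrete s).closure_eq

lemma measurable_of_bool {α : Type*} [MeasurableSpace α] {f : α → Bool}
    (h : MeasurableSet {x | f x = true}) : Measurable f := by
  intro s _
  have : f ⁻¹' s = (if true ∈ s then {x | f x = true} else ∅) ∪
      (if false ∈ s then {x | f x = true}ᶜ else ∅) := by
    ext x
    rcases hx : f x <;> by_cases h1 : true ∈ s <;> by_cases h2 : false ∈ s <;>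
      simp [Set.mem_preimage, hx, h1, h2]
  rw [this]
  refine MeasurableSet.union ?_ ?_ <;> split <;> simp [h, h.compl]


namespace BorelClonesAux

def SDom {ι : Type} (φ : (ι → Bool) → Bool) : Prop := ∀ x, φ (fun i => !(x i)) = !(φ x)

def FinDep (N : ℕ) (φ : (ℕ → Bool) → Bool) : Prop :=
  ∀ x y : ℕ → Bool, (∀ i, i < N → x i = y i) → φ x = φ y

lemma finitary_rep {N : ℕ} (hN : 0 < N) (φ : (ℕ → Bool) → Bool) (hdep : FinDep N φ) :
    ∃ g : (Fin N → Bool) → Bool,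
      (∀ x : ℕ → Bool, φ x = g (fun i => x i.val)) ∧
      (SDom φ → SDom g) ∧ g (fun _ => false) = φ (fun _ => false) := by
  set E : (Fin N → Bool) → (ℕ → Bool) :=
    fun u j => if h : j < N then u ⟨j, h⟩ else u ⟨0, hN⟩ with hE
  have hEneg : ∀ u, E (fun i => !(u i)) = fun j => !(E u j) := by
    intro u; funext j; simp only [hE]; split <;> rfl
  refine ⟨fun u => φ (E u), ?_, ?_, ?_⟩
  · intro x
    apply hdep
    intro i hi
    simp [hE, hi]
  · intro hSD u
    show φ (E fun i => !(u i)) = !(φ (E u))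
    rw [hEneg u, hSD (E u)]
  · show φ (E fun _ => false) = φ fun _ => false
    congr 1
    funext j
    simp only [hE]
    split <;> rfl

lemma mem_of_rep {F : Set BFun} (hF : IsClone F) {N : ℕ} (hN : 0 < N)
    (g : (Fin N → Bool) → Bool)
    (hg : (⟨some ⟨N, hN⟩, g⟩ : BFun) ∈ F) (φ : (ℕ → Bool) → Bool)
    (hrep : ∀ x, φ x = g (fun i => x i.val)) :
    (⟨none, φ⟩ : BFun) ∈ F := by
  have hc := hF.comp (some ⟨N, hN⟩) none g (fun i x => x i.val) hg
    (fun i => hF.proj none i.val)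
  suffices hsuff : φ = fun x => g fun i => (fun (i : Fin N) (x : Idx none → Bool) => x i.val) i x by
    rw [hsuff]; exact hc
  funext x; exact hrep x

/-- setting (a): all finitary self-dual functions belong to F -/
def HfinA (F : Set BFun) : Prop :=
  ∀ (n : ℕ+) (g : (Fin (n : ℕ) → Bool) → Bool), SDom g → (⟨some n, g⟩ : BFun) ∈ F

/-- setting (b): all finitary self-dual bottom-preserving functions belong to F -/
def HfinB (F : Set BFun) : Prop :=
  ∀ (n : ℕ+) (g : (Fin (n : ℕ) → Bool) → Bool), SDom g → g (fun _ => false) = false →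
    (⟨some n, g⟩ : BFun) ∈ F

lemma HfinA.toB {F : Set BFun} (h : HfinA F) : HfinB F := fun n g hg _ => h n g hg

lemma memω_finDep_A {F : Set BFun} (hF : IsClone F) (hfin : HfinA F) {N : ℕ} (hN : 0 < N)
    (φ : (ℕ → Bool) → Bool) (hdep : FinDep N φ) (hsd : SDom φ) :
    (⟨none, φ⟩ : BFun) ∈ F := by
  obtain ⟨g, hrep, hsdg, _⟩ := finitary_rep hN φ hdep
  exact mem_of_rep hF hN g (hfin ⟨N, hN⟩ g (hsdg hsd)) φ hrep

lemma memω_finDep_B {F : Set BFun} (hF : IsClone F) (hfin : HfinB F) {N : ℕ} (hN : 0 < N)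
    (φ : (ℕ → Bool) → Bool) (hdep : FinDep N φ) (hsd : SDom φ)
    (hpb : φ (fun _ => false) = false) :
    (⟨none, φ⟩ : BFun) ∈ F := by
  obtain ⟨g, hrep, hsdg, hpbg⟩ := finitary_rep hN φ hdep
  exact mem_of_rep hF hN g (hfin ⟨N, hN⟩ g (hsdg hsd) (hpbg.trans hpb)) φ hrep

lemma finDep_of_continuous (φ : (ℕ → Bool) → Bool) (h : Continuous φ) :
    ∃ N : ℕ, FinDep N φ := by
  have hloc : ∀ x : ℕ → Bool, ∃ I : Finset ℕ,
      ∀ y : ℕ → Bool, (∀ i ∈ I, y i = x i) → φ y = φ x := by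
    intro x
    have ho : IsOpen (φ ⁻¹' {φ x}) := (isOpen_discrete _).preimage h
    rw [isOpen_pi_iff] at ho
    obtain ⟨I, u, hIu, hsub⟩ := ho x rfl
    refine ⟨I, fun y hy => ?_⟩
    have : y ∈ (↑I : Set ℕ).pi u := fun i hi => (hy i hi) ▸ (hIu i hi).2
    exact hsub this
  choose I hI using hloc
  have hcov : (Set.univ : Set (ℕ → Bool)) ⊆
      ⋃ x : ℕ → Bool, {y : ℕ → Bool | ∀ i ∈ I x, y i = x i} := by
    intro x _
    exact Set.mem_iUnion.2 ⟨x, fun i _ => rfl⟩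
  have hopen : ∀ x : ℕ → Bool, IsOpen {y : ℕ → Bool | ∀ i ∈ I x, y i = x i} := by
    intro x
    have he : {y : ℕ → Bool | ∀ i ∈ I x, y i = x i}
        = (↑(I x) : Set ℕ).pi (fun i => {x i}) := by
      ext y; simp [Set.mem_pi]
    rw [he]
    exact isOpen_set_pi (I x).finite_toSet (fun i _ => isOpen_discrete _)
  obtain ⟨t, ht⟩ := isCompact_univ.elim_finite_subcover _ hopen hcov
  refine ⟨(t.sup (fun x => (I x).sup id)) + 1, ?_⟩
  intro x y hxy
  obtain ⟨x', hx't, hx'⟩ := by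
    have := ht (Set.mem_univ x)
    simpa using this
  have hyx' : ∀ i ∈ I x', y i = x' i := by
    intro i hi
    have hiN : i < (t.sup (fun x => (I x).sup id)) + 1 :=
      Nat.lt_succ_of_le (le_trans (Finset.le_sup (f := id) hi)
        (Finset.le_sup (f := fun x => (I x).sup id) hx't))
    rw [← hxy i hiN]
    exact hx' i hi
  rw [hI x' y hyx', hI x' x hx']

end BorelClonesAux
namespace BorelClonesAux

noncomputable def SOr2 : (ℕ → Bool) → Bool := fun y =>
  if y 0 = true ∧ y 1 = false then decide (∃ k, y (k + 2) = true)
  else if y 0 = false ∧ y 1 = true then decide (∀ k, y (k + 2) = true)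
  else y 0

noncomputable def HA (A : Set (ℕ → Bool)) : (ℕ → Bool) → Bool := fun z =>
  if z 0 = true ∧ z 1 = false then decide ((fun k => z (k + 2)) ∈ A)
  else if z 0 = false ∧ z 1 = true then !(decide ((fun k => !(z (k + 2))) ∈ A))
  else z 0

lemma HA_10 (A : Set (ℕ → Bool)) (z : ℕ → Bool) (h0 : z 0 = true) (h1 : z 1 = false) :
    HA A z = decide ((fun k => z (k + 2)) ∈ A) := by simp [HA, h0, h1]

lemma HA_01 (A : Set (ℕ → Bool)) (z : ℕ → Bool) (h0 : z 0 = false) (h1 : z 1 = true) :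
    HA A z = !(decide ((fun k => !(z (k + 2))) ∈ A)) := by simp [HA, h0, h1]

lemma HA_def (A : Set (ℕ → Bool)) (z : ℕ → Bool) (h : z 0 = z 1) : HA A z = z 0 := by
  rcases h0 : z 0 <;> rcases h1 : z 1 <;> simp [HA, h0, h1] <;> simp [h0, h1] at h

lemma HA_empty : HA (∅ : Set (ℕ → Bool)) = fun z => z 1 := by
  funext z
  rcases h0 : z 0 <;> rcases h1 : z 1 <;> simp [HA, h0, h1]

/-- the ternary gadget `maj(a, b, ¬w)` -/
def mg (a b w : Bool) : Bool := (a && b) || ((a || b) && !w)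

lemma HA_compl (A : Set (ℕ → Bool)) : HA Aᶜ = fun z => mg (z 0) (z 1) (HA A z) := by
  funext z
  rcases h0 : z 0 <;> rcases h1 : z 1 <;> simp [HA, mg, h0, h1]

/-- inner family for the union step -/
noncomputable def fam (s : ℕ → Set (ℕ → Bool)) : ℕ → (ℕ → Bool) → Bool
  | 0 => fun z => z 0
  | 1 => fun z => z 1
  | (k + 2) => HA (s k)

lemma HA_iUnion (s : ℕ → Set (ℕ → Bool)) :
    HA (⋃ n, s n) = fun z => SOr2 (fun j => fam s j z) := by
  funext z
  rcases h0 : z 0 <;> rcases h1 : z 1 <;>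
    simp [HA, SOr2, fam, h0, h1, Set.mem_iUnion, ← not_exists, decide_not, Bool.not_not]

end BorelClonesAux
namespace BorelClonesAux

lemma SDom_HA (A : Set (ℕ → Bool)) : SDom (HA A) := by
  intro z
  rcases h0 : z 0 <;> rcases h1 : z 1 <;> simp [HA, h0, h1, Bool.not_not]

lemma HA_presbot (A : Set (ℕ → Bool)) : HA A (fun _ => false) = false :=
  HA_def A _ rfl

lemma mg_dual : ∀ a b w : Bool, mg (!a) (!b) (!w) = !(mg a b w) := by decide

/-- the inner family for the complement step -/
noncomputable def fam2 (A : Set (ℕ → Bool)) : ℕ → (ℕ → Bool) → Bool := fun j =>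
  if j = 0 then (fun z => z 0) else if j = 1 then (fun z => z 1) else HA A

lemma HA_mem {F : Set BFun} (hF : IsClone F) (hfin : HfinB F)
    (hso : (⟨none, SOr2⟩ : BFun) ∈ F)
    {A : Set (ℕ → Bool)} (hA : MeasurableSet A) :
    (⟨none, HA A⟩ : BFun) ∈ F := by
  have hA' : MeasurableSpace.GenerateMeasurable
      {s : Set (ℕ → Bool) |
        ∃ i : ℕ, @MeasurableSet _ ((inferInstance : MeasurableSpace Bool).comap
          fun b : ℕ → Bool => b i) s} A :=
    MeasurableSpace.measurableSet_iSup.mp hA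
  clear hA
  induction hA' with
  | basic u hu =>
    obtain ⟨i, t, _, rfl⟩ := hu
    have hdep : FinDep (i + 3) (HA ((fun x : ℕ → Bool => x i) ⁻¹' t)) := by
      intro x y hxy
      have h0 : x 0 = y 0 := hxy 0 (by omega)
      have h1 : x 1 = y 1 := hxy 1 (by omega)
      have h2 : x (i + 2) = y (i + 2) := hxy (i + 2) (by omega)
      simp only [HA, Set.mem_preimage, h0, h1, h2]
    exact memω_finDep_B hF hfin (by omega) _ hdep (SDom_HA _) (HA_presbot _)
  | empty =>
    rw [HA_empty]
    exact hF.proj none 1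
  | compl s _ ih =>
    have hmg : (⟨none, fun y : ℕ → Bool => mg (y 0) (y 1) (y 2)⟩ : BFun) ∈ F := by
      refine memω_finDep_B hF hfin (show 0 < 3 by omega) _ ?_ ?_ ?_
      · intro x y hxy
        show mg (x 0) (x 1) (x 2) = mg (y 0) (y 1) (y 2)
        rw [hxy 0 (by omega), hxy 1 (by omega), hxy 2 (by omega)]
      · intro x; exact mg_dual _ _ _
      · rfl
    have hcomp := hF.comp none none _ (fam2 s) hmg (fun j => by
      by_cases hj0 : j = 0
      · subst hj0; simpa [fam2] using hF.proj none 0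
      · by_cases hj1 : j = 1
        · subst hj1; simpa [fam2] using hF.proj none 1
        · simpa [fam2, hj0, hj1] using ih)
    have he : HA sᶜ = fun z : ℕ → Bool => (fun y : ℕ → Bool => mg (y 0) (y 1) (y 2))
        (fun j => fam2 s j z) := by
      rw [HA_compl]
      funext z
      simp [fam2]
    rw [he]
    exact hcomp
  | iUnion f _ ih =>
    have hcomp := hF.comp none none SOr2 (fam f) hso (fun j => by
      match j with
      | 0 => exact hF.proj none 0
      | 1 => exact hF.proj none 1
      | (k + 2) => exact ih k)
    have he : HA (⋃ n, f n) = fun z : ℕ → Bool => SOr2 (fun j => fam f j z) := HA_iUnion f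
    rw [he]
    exact hcomp

end BorelClonesAux
namespace BorelClonesAux

lemma sd_top {h : (ℕ → Bool) → Bool} (hsd : SDom h) (h0 : h (fun _ => false) = false) :
    h (fun _ => true) = true := by
  have := hsd (fun _ => false)
  simp [h0] at this
  convert this using 2

/-- The continuous approximating family: given a family of points `y n` agreeing with `z`
on the first `n` coordinates, `c j w` is the `j`-th coordinate of `y (least 1 of w)`,
or of `z` if `w` has no `1`; each `c j` depends on the first `j+1` coordinates only. -/
lemma c_exists (z : ℕ → Bool) (y : ℕ → ℕ → Bool)
    (hy1 : ∀ n i, i < n → y n i = z i) :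
    ∃ c : ℕ → (ℕ → Bool) → Bool,
      (∀ (w : ℕ → Bool) (hw : ∃ k, w k = true), (fun j => c j w) = y (Nat.find hw)) ∧
      (∀ w : ℕ → Bool, (¬ ∃ k, w k = true) → (fun j => c j w) = z) ∧
      (∀ (j : ℕ) (w w' : ℕ → Bool), (∀ i, i ≤ j → w i = w' i) → c j w = c j w') := by
  classical
  set c : ℕ → (ℕ → Bool) → Bool := fun j w =>
    if hw : ∃ k, k ≤ j ∧ w k = true then
      y (Nat.find (⟨hw.choose, hw.choose_spec.2⟩ : ∃ k, w k = true)) j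
    else z j with hcdef
  refine ⟨c, ?_, ?_, ?_⟩
  · intro w hw
    funext j
    simp only [hcdef]
    split
    · rfl
    · next hno =>
      have hfj : j < Nat.find hw := by
        by_contra hle
        exact hno ⟨Nat.find hw, Nat.le_of_not_lt hle, Nat.find_spec hw⟩
      exact (hy1 (Nat.find hw) j hfj).symm
  · intro w hw
    funext j
    simp only [hcdef]
    split
    · next he => exact absurd ⟨he.choose, he.choose_spec.2⟩ hw
    · rfl
  · intro j w w' hww
    simp only [hcdef]
    by_cases hw : ∃ k, k ≤ j ∧ w k = true
    · have hw' : ∃ k, k ≤ j ∧ w' k = true := by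
        obtain ⟨k, hk1, hk2⟩ := hw
        exact ⟨k, hk1, (hww k hk1) ▸ hk2⟩
      rw [dif_pos hw, dif_pos hw']
      have hle : Nat.find (⟨hw.choose, hw.choose_spec.2⟩ : ∃ k, w k = true) ≤ j := by
        obtain ⟨k, hk1, hk2⟩ := hw
        exact le_trans (Nat.find_min' _ hk2) hk1
      have hfind : Nat.find (⟨hw'.choose, hw'.choose_spec.2⟩ : ∃ k, w' k = true)
          = Nat.find (⟨hw.choose, hw.choose_spec.2⟩ : ∃ k, w k = true) := by
        rw [Nat.find_eq_iff]
        constructor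
        · rw [← hww _ hle]
          exact Nat.find_spec (⟨hw.choose, hw.choose_spec.2⟩ : ∃ k, w k = true)
        · intro m hm
          rw [← hww m (le_trans (Nat.le_of_lt hm) hle)]
          exact Nat.find_min _ hm
      rw [hfind]
    · have hw' : ¬ ∃ k, k ≤ j ∧ w' k = true := by
        intro hcon
        obtain ⟨k, hk1, hk2⟩ := hcon
        exact hw ⟨k, hk1, (hww k hk1).symm ▸ hk2⟩
      rw [dif_neg hw, dif_neg hw']

lemma SOr2_mem {F : Set BFun} (hF : IsClone F) (hfin : HfinB F)
    (h : (ℕ → Bool) → Bool) (hmem : (⟨none, h⟩ : BFun) ∈ F) (hsd : SDom h)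
    (h0 : h (fun _ => false) = false) (z : ℕ → Bool) (hz : h z = false)
    (happ : ∀ n : ℕ, ∃ x : ℕ → Bool, (∀ i, i < n → x i = z i) ∧ h x = true) :
    (⟨none, SOr2⟩ : BFun) ∈ F := by
  classical
  have htop : h (fun _ => true) = true := sd_top hsd h0
  choose y hy1 hy2 using happ
  obtain ⟨c, hc1, hc0, hcdep⟩ := c_exists z y hy1
  set e : ℕ → (ℕ → Bool) → Bool := fun j v =>
    if v 0 = true ∧ v 1 = false then c j (fun k => v (k + 2))
    else if v 0 = false ∧ v 1 = true then !(c j (fun k => !(v (k + 2))))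
    else v 0 with hedef
  have hemem : ∀ j, (⟨none, e j⟩ : BFun) ∈ F := by
    intro j
    refine memω_finDep_B hF hfin (show 0 < j + 3 by omega) _ ?_ ?_ ?_
    · intro x x' hxx
      have h0' : x 0 = x' 0 := hxx 0 (by omega)
      have h1' : x 1 = x' 1 := hxx 1 (by omega)
      have hc' : c j (fun k => x (k + 2)) = c j (fun k => x' (k + 2)) :=
        hcdep j _ _ (fun i hi => hxx (i + 2) (by omega))
      have hc'' : c j (fun k => !(x (k + 2))) = c j (fun k => !(x' (k + 2))) :=
        hcdep j _ _ (fun i hi => by rw [hxx (i + 2) (by omega)])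
      simp only [hedef, h0', h1', hc', hc'']
    · intro v
      rcases h0' : v 0 <;> rcases h1' : v 1 <;>
        simp [hedef, h0', h1', Bool.not_not]
    · simp [hedef]
  have hcomp := hF.comp none none h e hmem hemem
  have he : SOr2 = fun v : ℕ → Bool => h (fun j => e j v) := by
    funext v
    rcases h0' : v 0 <;> rcases h1' : v 1
    · have hev : (fun j => e j v) = fun _ => false := by
        funext j; simp [hedef, h0', h1']
      rw [hev, h0]
      simp [SOr2, h0', h1']
    · have hstep : (fun j => e j v) = fun j => !(c j (fun k => !(v (k + 2)))) := by
        funext j; simp [hedef, h0', h1']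
      rw [hstep, hsd (fun j => c j (fun k => !(v (k + 2))))]
      by_cases hw : ∃ k, (!(v (k + 2))) = true
      · rw [hc1 _ hw, hy2]
        simp only [SOr2, h0', h1']
        simp only [Bool.not_eq_true'] at hw
        obtain ⟨k, hk⟩ := hw
        simp [hk]
        exact ⟨k, hk⟩
      · rw [hc0 _ hw, hz]
        simp only [SOr2, h0', h1']
        simp only [Bool.not_eq_true'] at hw
        push_neg at hw
        simp [hw]
    · have hstep : (fun j => e j v) = fun j => c j (fun k => v (k + 2)) := by
        funext j; simp [hedef, h0', h1']
      rw [hstep]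
      by_cases hw : ∃ k, v (k + 2) = true
      · rw [hc1 _ hw, hy2]
        simp only [SOr2, h0', h1']
        simp [hw]
      · rw [hc0 _ hw, hz]
        simp only [SOr2, h0', h1']
        simp [hw]
    · have hev : (fun j => e j v) = fun _ => true := by
        funext j; simp [hedef, h0', h1']
      rw [hev, htop]
      simp [SOr2, h0', h1']
  rw [he]
  exact hcomp

end BorelClonesAux
namespace BorelClonesAux

lemma sd_of_sdom {a : Arity} {φ : (Idx a → Bool) → Bool} (h : SDom φ) :
    SelfDual ⟨a, φ⟩ := h

lemma sdom_of_sd {a : Arity} {φ : (Idx a → Bool) → Bool} (h : SelfDual ⟨a, φ⟩) :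
    SDom φ := h

lemma fin_finitary (n : ℕ+) (g : (Idx (some n) → Bool) → Bool) :
    finitary ⟨some n, g⟩ := by simp [finitary]

lemma mem_SD {F : Set BFun} (hF : IsClone F)
    (hres2 : ∀ f ∈ finRes F, SelfDual f) :
    ∀ f ∈ F, SelfDual f := by
  rintro ⟨a, φ⟩ hf x
  have hcomp := hF.comp a (some 2) φ (fun i u => u (if x i then 1 else 0)) hf
    (fun i => hF.proj (some 2) (if x i then 1 else 0))
  have hsd := hres2 _ ⟨hcomp, fin_finitary 2 _⟩
  have key := hsd (fun k => decide (k = 1))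
  have e1 : (fun i => (fun k : Idx (some 2) => decide (k = 1)) (if x i then 1 else 0)) = x := by
    funext i; rcases hxi : x i <;> simp [hxi] <;> decide
  have e2 : (fun i => !((fun k : Idx (some 2) => decide (k = 1)) (if x i then 1 else 0)))
      = fun i => !(x i) := by
    funext i; rcases hxi : x i <;> simp [hxi] <;> decide
  show φ (fun i => !(x i)) = !(φ x)
  calc φ (fun i => !(x i))
      = φ (fun i => !((fun k : Idx (some 2) => decide (k = 1)) (if x i then 1 else 0))) := by
        rw [e2]
    _ = !(φ (fun i => (fun k : Idx (some 2) => decide (k = 1)) (if x i then 1 else 0))) := key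
    _ = !(φ x) := by rw [e1]

lemma mem_PresBot {F : Set BFun} (hF : IsClone F)
    (hres2 : ∀ f ∈ finRes F, PresBot f) :
    ∀ f ∈ F, PresBot f := by
  rintro ⟨a, φ⟩ hf
  have hcomp := hF.comp a (some 1) φ (fun _ u => u 0) hf
    (fun _ => hF.proj (some 1) 0)
  have hpb := hres2 _ ⟨hcomp, fin_finitary 1 _⟩
  exact hpb

lemma FinDep.mono {N M : ℕ} {φ : (ℕ → Bool) → Bool} (h : FinDep N φ) (hNM : N ≤ M) :
    FinDep M φ := fun x y hxy => h x y (fun i hi => hxy i (lt_of_lt_of_le hi hNM))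

lemma cont_memA {F : Set BFun} (hF : IsClone F) (hfin : HfinA F)
    (φ : (ℕ → Bool) → Bool) (hc : Continuous φ) (hsd : SDom φ) :
    (⟨none, φ⟩ : BFun) ∈ F := by
  obtain ⟨N, hdep⟩ := finDep_of_continuous φ hc
  exact memω_finDep_A hF hfin (show 0 < max N 1 by omega) φ
    (hdep.mono (le_max_left _ _)) hsd

lemma cont_memB {F : Set BFun} (hF : IsClone F) (hfin : HfinB F)
    (φ : (ℕ → Bool) → Bool) (hc : Continuous φ) (hsd : SDom φ)
    (hpb : φ (fun _ => false) = false) :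
    (⟨none, φ⟩ : BFun) ∈ F := by
  obtain ⟨N, hdep⟩ := finDep_of_continuous φ hc
  exact memω_finDep_B hF hfin (show 0 < max N 1 by omega) φ
    (hdep.mono (le_max_left _ _)) hsd hpb

/-- extraction of a discontinuity point, normalized so that the value there is `false` -/
lemma discont_point {h : (ℕ → Bool) → Bool} (hsd : SDom h) (hnc : ¬ Continuous h) :
    ∃ z : ℕ → Bool, h z = false ∧
      ∀ n : ℕ, ∃ x : ℕ → Bool, (∀ i, i < n → x i = z i) ∧ h x = true := by
  by_cases hloc : ∀ z : ℕ → Bool, ∃ N : ℕ, ∀ x : ℕ → Bool,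
      (∀ i, i < N → x i = z i) → h x = h z
  · exfalso
    apply hnc
    rw [← IsLocallyConstant.iff_continuous]
    rw [IsLocallyConstant.iff_exists_open]
    intro z
    obtain ⟨N, hN⟩ := hloc z
    refine ⟨{x : ℕ → Bool | ∀ i, i < N → x i = z i}, ?_, fun i _ => rfl, fun x hx => hN x hx⟩
    have he : {x : ℕ → Bool | ∀ i, i < N → x i = z i}
        = (↑(Finset.range N) : Set ℕ).pi (fun i => {z i}) := by
      ext x; simp [Set.mem_pi]
    rw [he]
    exact isOpen_set_pi (Finset.range N).finite_toSet (fun i _ => isOpen_discrete _)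
  · push_neg at hloc
    obtain ⟨z, hz⟩ := hloc
    rcases hv : h z
    · refine ⟨z, hv, fun n => ?_⟩
      obtain ⟨x, hx1, hx2⟩ := hz n
      refine ⟨x, hx1, ?_⟩
      rcases hx : h x
      · exact absurd (hx.trans hv.symm) hx2
      · rfl
    · refine ⟨fun i => !(z i), by rw [hsd z, hv]; rfl, fun n => ?_⟩
      obtain ⟨x, hx1, hx2⟩ := hz n
      refine ⟨fun i => !(x i), fun i hi => by simp only [hx1 i hi], ?_⟩
      rw [hsd x]
      rcases hx : h x
      · rfl
      · exact absurd (hx.trans hv.symm) hx2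

end BorelClonesAux
namespace BorelClonesAux

lemma measurable_coord (i : ℕ) (b : Bool) : MeasurableSet {y : ℕ → Bool | y i = b} := by
  have he : {y : ℕ → Bool | y i = b} = (fun y : ℕ → Bool => y i) ⁻¹' {b} := by
    ext y; simp
  rw [he]
  exact measurable_pi_apply i (measurableSet_singleton b)

lemma decide_exists_false (p : ℕ → Bool) :
    decide (∃ k, p k = false) = !decide (∀ k, p k = true) := by
  by_cases h : ∀ k, p k = true
  · have h2 : ¬ ∃ k, p k = false := by
      rintro ⟨k, hk⟩
      rw [h k] at hk
      cases hk
    simp [h, h2]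
  · have h2 : ∃ k, p k = false := by
      push_neg at h
      obtain ⟨k, hk⟩ := h
      exact ⟨k, by rcases hpk : p k <;> simp_all⟩
    simp [h, h2]

lemma decide_forall_false (p : ℕ → Bool) :
    decide (∀ k, p k = false) = !decide (∃ k, p k = true) := by
  by_cases h : ∃ k, p k = true
  · have h2 : ¬ ∀ k, p k = false := by
      intro hall
      obtain ⟨k, hk⟩ := h
      rw [hall k] at hk
      cases hk
    simp [h, h2]
  · have h2 : ∀ k, p k = false := by
      intro k
      rcases hpk : p k
      · rfl
      · exact absurd ⟨k, hpk⟩ h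
    simp [h, h2]

lemma SDom_SOr2 : SDom SOr2 := by
  intro y
  rcases h0 : y 0 <;> rcases h1 : y 1 <;>
    simp [SOr2, h0, h1, Bool.not_eq_true', decide_exists_false, decide_forall_false]

lemma SOr2_presbot : SOr2 (fun _ => false) = false := by simp [SOr2]

lemma SOr2_borel : MeasurableSet {y : ℕ → Bool | SOr2 y = true} := by
  have he : {y : ℕ → Bool | SOr2 y = true} =
      (({y : ℕ → Bool | y 0 = true} ∩ {y | y 1 = false}) ∩ ⋃ k, {y | y (k + 2) = true}) ∪
      (({y : ℕ → Bool | y 0 = false} ∩ {y | y 1 = true}) ∩ ⋂ k, {y | y (k + 2) = true}) ∪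
      ({y : ℕ → Bool | y 0 = true} ∩ {y | y 1 = true}) := by
    ext y
    rcases h0 : y 0 <;> rcases h1 : y 1 <;>
      simp [SOr2, h0, h1, Set.mem_iUnion, Set.mem_iInter]
  rw [he]
  refine MeasurableSet.union (MeasurableSet.union ?_ ?_) ?_
  · exact ((measurable_coord 0 true).inter (measurable_coord 1 false)).inter
      (MeasurableSet.iUnion (fun k => measurable_coord (k + 2) true))
  · exact ((measurable_coord 0 false).inter (measurable_coord 1 true)).inter
      (MeasurableSet.iInter (fun k => measurable_coord (k + 2) true))
  · exact (measurable_coord 0 true).inter (measurable_coord 1 true)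

lemma SOr2_not_continuous : ¬ Continuous SOr2 := by
  intro hc
  obtain ⟨N, hdep⟩ := finDep_of_continuous SOr2 hc
  set x : ℕ → Bool := fun j => if j = 0 then false else true with hx
  set y : ℕ → Bool := fun j => if j = 0 then false else decide (j < N + 2) with hy
  have hagree : ∀ i, i < N → x i = y i := by
    intro i hi
    by_cases hi0 : i = 0
    · simp [hx, hy, hi0]
    · simp only [hx, hy, if_neg hi0]
      simp [show i < N + 2 by omega]
  have h1 := hdep x y hagree
  have hy0 : y 0 = false := by simp [hy]
  have hy1 : y 1 = true := by simp [hy]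
  have hx0 : x 0 = false := by simp [hx]
  have hx1 : x 1 = true := by simp [hx]
  have hnall : ¬ ∀ k : ℕ, y (k + 2) = true := by
    intro hall
    have h2 := hall (N + 1)
    simp only [hy] at h2
    simp at h2
  have hall : ∀ k : ℕ, x (k + 2) = true := by
    intro k; simp [hx]
  rw [show SOr2 x = true by simp [SOr2, hx0, hx1, hall],
    show SOr2 y = false by simp [SOr2, hy0, hy1, hnall]] at h1
  cases h1

lemma SOr2_vanish : (fun _ => false) ∉ closure {y : ℕ → Bool | SOr2 y = true} := by
  rw [notMem_closure_iff_nat]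
  refine ⟨2, fun y hy => ?_⟩
  simp only [Set.mem_setOf_eq] at hy
  rcases h0 : y 0
  · rcases h1 : y 1
    · simp [SOr2, h0, h1] at hy
    · exact ⟨1, by omega, by simp [h1]⟩
  · exact ⟨0, by omega, by simp [h0]⟩

noncomputable def wV : (ℕ → Bool) → Bool := fun x =>
  if x 0 = true then decide (∀ i, x i = true) else decide (∃ i, x i = true)

lemma SDom_wV : SDom wV := by
  intro x
  rcases h0 : x 0 <;>
    simp [wV, h0, Bool.not_eq_true', decide_exists_false, decide_forall_false]

lemma wV_presbot : wV (fun _ => false) = false := by simp [wV]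

lemma wV_borel : MeasurableSet {x : ℕ → Bool | wV x = true} := by
  have he : {x : ℕ → Bool | wV x = true} =
      ({x : ℕ → Bool | x 0 = true} ∩ ⋂ i, {x | x i = true}) ∪
      ({x : ℕ → Bool | x 0 = false} ∩ ⋃ i, {x | x i = true}) := by
    ext x
    rcases h0 : x 0 <;> simp [wV, h0, Set.mem_iUnion, Set.mem_iInter]
  rw [he]
  exact ((measurable_coord 0 true).inter
      (MeasurableSet.iInter (fun i => measurable_coord i true))).union
    ((measurable_coord 0 false).inter
      (MeasurableSet.iUnion (fun i => measurable_coord i true)))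

lemma wV_not_vanish : ¬ ((fun _ => false) ∉ closure {x : ℕ → Bool | wV x = true}) := by
  rw [notMem_closure_iff_nat]
  push_neg
  intro N
  refine ⟨fun j => decide (j = N + 1), ?_, ?_⟩
  · show wV (fun j => decide (j = N + 1)) = true
    have h0 : (decide ((0 : ℕ) = N + 1)) = false := by simp
    simp [wV, h0]
  · intro i hi
    simp only [ne_eq, Bool.not_eq_false] at *
    simp [show ¬ (i = N + 1) by omega]

end BorelClonesAux
namespace BorelClonesAux

lemma measurable_coord' {ι : Type} (i : ι) (b : Bool) :
    MeasurableSet {y : ι → Bool | y i = b} := by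
  have he : {y : ι → Bool | y i = b} = (fun y : ι → Bool => y i) ⁻¹' {b} := by
    ext y; simp
  rw [he]
  exact measurable_pi_apply i (measurableSet_singleton b)

lemma borel_proj (a : Arity) (i : Idx a) : IsBorelFun ⟨a, fun x => x i⟩ :=
  measurable_coord' i true

lemma cont_proj (a : Arity) (i : Idx a) : IsContFun ⟨a, fun x => x i⟩ :=
  continuous_apply i

lemma sd_proj (a : Arity) (i : Idx a) : SelfDual ⟨a, fun x => x i⟩ := fun _ => rfl

lemma presbot_proj (a : Arity) (i : Idx a) : PresBot ⟨a, fun x => x i⟩ := rfl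

lemma vanish_proj (a : Arity) (i : Idx a) : VanishNearBot ⟨a, fun x => x i⟩ := by
  refine (notMem_closure_iff _ _).2 ⟨{i}, ?_⟩
  intro x hx
  simp only [Set.mem_setOf_eq] at hx
  exact ⟨i, Finset.mem_singleton_self i, by simp [hx]⟩

lemma borel_comp {a b : Arity} {g : (Idx a → Bool) → Bool}
    {f : Idx a → (Idx b → Bool) → Bool}
    (hg : IsBorelFun ⟨a, g⟩) (hf : ∀ i, IsBorelFun ⟨b, f i⟩) :
    IsBorelFun ⟨b, fun x => g fun i => f i x⟩ := by
  have hm : Measurable (fun (x : Idx b → Bool) (i : Idx a) => f i x) :=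
    measurable_pi_lambda _ (fun i => measurable_of_bool (hf i))
  exact hm hg

lemma cont_comp {a b : Arity} {g : (Idx a → Bool) → Bool}
    {f : Idx a → (Idx b → Bool) → Bool}
    (hg : IsContFun ⟨a, g⟩) (hf : ∀ i, IsContFun ⟨b, f i⟩) :
    IsContFun ⟨b, fun x => g fun i => f i x⟩ := by
  show Continuous fun x => g fun i => f i x
  have hg' : Continuous g := hg
  have hf' : ∀ i, Continuous (f i) := hf
  exact hg'.comp (continuous_pi hf')

lemma sd_comp {a b : Arity} {g : (Idx a → Bool) → Bool}
    {f : Idx a → (Idx b → Bool) → Bool}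
    (hg : SelfDual ⟨a, g⟩) (hf : ∀ i, SelfDual ⟨b, f i⟩) :
    SelfDual ⟨b, fun x => g fun i => f i x⟩ := by
  intro x
  show g (fun i => f i (fun j => !(x j))) = !(g (fun i => f i x))
  have he : (fun i => f i (fun j => !(x j))) = fun i => !(f i x) := by
    funext i; exact hf i x
  rw [he]
  exact hg (fun i => f i x)

lemma presbot_comp {a b : Arity} {g : (Idx a → Bool) → Bool}
    {f : Idx a → (Idx b → Bool) → Bool}
    (hg : PresBot ⟨a, g⟩) (hf : ∀ i, PresBot ⟨b, f i⟩) :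
    PresBot ⟨b, fun x => g fun i => f i x⟩ := by
  show g (fun i => f i (fun _ => false)) = false
  have he : (fun i => f i (fun _ => false)) = fun _ => false := by
    funext i; exact hf i
  rw [he]
  exact hg

lemma vanish_comp {a b : Arity} {g : (Idx a → Bool) → Bool}
    {f : Idx a → (Idx b → Bool) → Bool}
    (hg : VanishNearBot ⟨a, g⟩) (hf : ∀ i, VanishNearBot ⟨b, f i⟩) :
    VanishNearBot ⟨b, fun x => g fun i => f i x⟩ := by
  classical
  obtain ⟨I, hI⟩ := (notMem_closure_iff _ _).1 hg
  choose T hT using fun i => (notMem_closure_iff _ _).1 (hf i)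
  refine (notMem_closure_iff _ _).2 ⟨I.biUnion T, ?_⟩
  intro x hx
  obtain ⟨i, hiI, hio⟩ := hI _ hx
  have hfi : x ∈ {x | f i x = true} := by
    simp only [Set.mem_setOf_eq]
    rcases hv : f i x
    · exact absurd (show (fun i => f i x) i = (fun _ => false) i from hv) hio
    · rfl
  obtain ⟨j, hjT, hjo⟩ := hT i x hfi
  exact ⟨j, Finset.mem_biUnion.2 ⟨i, hiI, hjT⟩, hjo⟩

lemma isClone_D1 : IsClone D1 :=
  ⟨fun a i => ⟨borel_proj a i, sd_proj a i⟩,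
   fun _ _ _ _ hg hf => ⟨borel_comp hg.1 (fun i => (hf i).1),
     sd_comp hg.2 (fun i => (hf i).2)⟩⟩

lemma isClone_D2 : IsClone D2 :=
  ⟨fun a i => ⟨cont_proj a i, sd_proj a i⟩,
   fun _ _ _ _ hg hf => ⟨cont_comp hg.1 (fun i => (hf i).1),
     sd_comp hg.2 (fun i => (hf i).2)⟩⟩

lemma isClone_DT1 : IsClone DT1 :=
  ⟨fun a i => ⟨borel_proj a i, sd_proj a i, presbot_proj a i⟩,
   fun _ _ _ _ hg hf => ⟨borel_comp hg.1 (fun i => (hf i).1),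
     sd_comp hg.2.1 (fun i => (hf i).2.1), presbot_comp hg.2.2 (fun i => (hf i).2.2)⟩⟩

lemma isClone_DT2 : IsClone DT2 :=
  ⟨fun a i => ⟨borel_proj a i, sd_proj a i, vanish_proj a i⟩,
   fun _ _ _ _ hg hf => ⟨borel_comp hg.1 (fun i => (hf i).1),
     sd_comp hg.2.1 (fun i => (hf i).2.1), vanish_comp hg.2.2 (fun i => (hf i).2.2)⟩⟩

lemma isClone_DT3 : IsClone DT3 :=
  ⟨fun a i => ⟨cont_proj a i, sd_proj a i, presbot_proj a i⟩,
   fun _ _ _ _ hg hf => ⟨cont_comp hg.1 (fun i => (hf i).1),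
     sd_comp hg.2.1 (fun i => (hf i).2.1), presbot_comp hg.2.2 (fun i => (hf i).2.2)⟩⟩

lemma fin_borel {n : ℕ+} (g : (Idx (some n) → Bool) → Bool) : IsBorelFun ⟨some n, g⟩ :=
  fin_all_measurable _

lemma fin_cont {n : ℕ+} (g : (Idx (some n) → Bool) → Bool) : IsContFun ⟨some n, g⟩ :=
  fin_all_continuous _

lemma fin_vanish_iff {n : ℕ+} (g : (Idx (some n) → Bool) → Bool) :
    VanishNearBot ⟨some n, g⟩ ↔ PresBot ⟨some n, g⟩ := by
  show (fun _ => false) ∉ closure {x | g x = true} ↔ g (fun _ => false) = false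
  rw [fin_closure_eq]
  constructor
  · intro h
    rcases hv : g (fun _ => false)
    · rfl
    · exact absurd hv h
  · intro h hc
    rw [Set.mem_setOf_eq, h] at hc
    cases hc

lemma finRes_D1 : finRes D1 = {f | finitary f ∧ SelfDual f} := by
  ext f
  constructor
  · rintro ⟨⟨_, hsd⟩, hfin⟩
    exact ⟨hfin, hsd⟩
  · rintro ⟨hfin, hsd⟩
    obtain ⟨a, φ⟩ := f
    cases a with
    | none => exact absurd rfl hfin
    | some n => exact ⟨⟨fin_borel φ, hsd⟩, hfin⟩

lemma finRes_D2 : finRes D2 = {f | finitary f ∧ SelfDual f} := by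
  ext f
  constructor
  · rintro ⟨⟨_, hsd⟩, hfin⟩
    exact ⟨hfin, hsd⟩
  · rintro ⟨hfin, hsd⟩
    obtain ⟨a, φ⟩ := f
    cases a with
    | none => exact absurd rfl hfin
    | some n => exact ⟨⟨fin_cont φ, hsd⟩, hfin⟩

lemma finRes_DT1 : finRes DT1 = {f | finitary f ∧ SelfDual f ∧ PresBot f} := by
  ext f
  constructor
  · rintro ⟨⟨_, hsd, hpb⟩, hfin⟩
    exact ⟨hfin, hsd, hpb⟩
  · rintro ⟨hfin, hsd, hpb⟩
    obtain ⟨a, φ⟩ := f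
    cases a with
    | none => exact absurd rfl hfin
    | some n => exact ⟨⟨fin_borel φ, hsd, hpb⟩, hfin⟩

lemma finRes_DT2 : finRes DT2 = {f | finitary f ∧ SelfDual f ∧ PresBot f} := by
  ext f
  constructor
  · rintro ⟨⟨_, hsd, hv⟩, hfin⟩
    refine ⟨hfin, hsd, ?_⟩
    obtain ⟨a, φ⟩ := f
    cases a with
    | none => exact absurd rfl hfin
    | some n => exact (fin_vanish_iff φ).1 hv
  · rintro ⟨hfin, hsd, hpb⟩
    obtain ⟨a, φ⟩ := f
    cases a with
    | none => exact absurd rfl hfin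
    | some n => exact ⟨⟨fin_borel φ, hsd, (fin_vanish_iff φ).2 hpb⟩, hfin⟩

lemma finRes_DT3 : finRes DT3 = {f | finitary f ∧ SelfDual f ∧ PresBot f} := by
  ext f
  constructor
  · rintro ⟨⟨_, hsd, hpb⟩, hfin⟩
    exact ⟨hfin, hsd, hpb⟩
  · rintro ⟨hfin, hsd, hpb⟩
    obtain ⟨a, φ⟩ := f
    cases a with
    | none => exact absurd rfl hfin
    | some n => exact ⟨⟨fin_cont φ, hsd, hpb⟩, hfin⟩

lemma cont_isBorel {a : Arity} {φ : (Idx a → Bool) → Bool} (h : IsContFun ⟨a, φ⟩) :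
    IsBorelFun ⟨a, φ⟩ := by
  cases a with
  | none =>
    show MeasurableSet {x : ℕ → Bool | φ x = true}
    have ho : IsOpen {x : ℕ → Bool | φ x = true} := by
      have : {x : ℕ → Bool | φ x = true} = φ ⁻¹' {true} := by ext x; simp
      rw [this]
      exact (isOpen_discrete _).preimage h
    exact ho.measurableSet
  | some n => exact fin_borel φ

lemma D2_subset_Borel : D2 ⊆ BorelClass := fun f hf => cont_isBorel hf.1
lemma D1_subset_Borel : D1 ⊆ BorelClass := fun _ hf => hf.1
lemma DT1_subset_Borel : DT1 ⊆ BorelClass := fun _ hf => hf.1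
lemma DT2_subset_Borel : DT2 ⊆ BorelClass := fun _ hf => hf.1
lemma DT3_subset_Borel : DT3 ⊆ BorelClass := fun f hf => cont_isBorel hf.1

end BorelClonesAux
namespace BorelClonesAux

lemma wV_mem {F : Set BFun} (hF : IsClone F) (hfin : HfinB F)
    (h : (ℕ → Bool) → Bool) (hmem : (⟨none, h⟩ : BFun) ∈ F) (hsd : SDom h)
    (h0 : h (fun _ => false) = false)
    (happ : ∀ n : ℕ, ∃ x : ℕ → Bool, (∀ i, i < n → x i = false) ∧ h x = true) :
    (⟨none, wV⟩ : BFun) ∈ F := by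
  classical
  choose y hy1 hy2 using happ
  obtain ⟨c, hc1, hc0, hcdep⟩ := c_exists (fun _ => false) y hy1
  have hczero : ∀ j, c j (fun _ => false) = false := by
    intro j
    have := hc0 (fun _ => false) (by simp)
    exact congrFun this j
  set q : ℕ → (ℕ → Bool) → Bool := fun j x =>
    if x 0 = true then !(c j (fun k => !(x k))) else c j x with hqdef
  have hqmem : ∀ j, (⟨none, q j⟩ : BFun) ∈ F := by
    intro j
    refine memω_finDep_B hF hfin (show 0 < j + 1 by omega) _ ?_ ?_ ?_
    · intro x x' hxx
      have h0' : x 0 = x' 0 := hxx 0 (by omega)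
      have hc' : c j x = c j x' := hcdep j _ _ (fun i hi => hxx i (by omega))
      have hc'' : c j (fun k => !(x k)) = c j (fun k => !(x' k)) :=
        hcdep j _ _ (fun i hi => by rw [hxx i (by omega)])
      simp only [hqdef, h0', hc', hc'']
    · intro x
      have hnn : (fun k => !(!(x k))) = x := by funext k; simp
      rcases hx0 : x 0 <;> simp [hqdef, hx0, hnn]
    · simp [hqdef, hczero]
  have hcomp := hF.comp none none h q hmem hqmem
  have he : wV = fun x : ℕ → Bool => h (fun j => q j x) := by
    funext x
    rcases hx0 : x 0
    · have hstep : (fun j => q j x) = fun j => c j x := by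
        funext j; simp [hqdef, hx0]
      rw [hstep]
      by_cases hw : ∃ k, x k = true
      · rw [hc1 _ hw, hy2]
        simp [wV, hx0, hw]
      · rw [hc0 _ hw, h0]
        simp only [wV, hx0]
        simp [hw]
    · have hstep : (fun j => q j x) = fun j => !(c j (fun k => !(x k))) := by
        funext j; simp [hqdef, hx0]
      rw [hstep, hsd (fun j => c j (fun k => !(x k)))]
      by_cases hw : ∃ k, (!(x k)) = true
      · rw [hc1 _ hw, hy2]
        simp only [Bool.not_eq_true'] at hw
        obtain ⟨k, hk⟩ := hw
        have hna : ¬ ∀ i, x i = true := fun hall => by rw [hall k] at hk; cases hk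
        simp [wV, hx0, hna]
      · rw [hc0 _ hw, h0]
        simp only [Bool.not_eq_true'] at hw
        push_neg at hw
        simp only [Bool.not_eq_false] at hw
        simp [wV, hx0, hw]
  rw [he]
  exact hcomp

lemma decide_bexists_false (n : ℕ) (p : ℕ → Bool) :
    decide (∃ i, i < n ∧ p i = false) = !decide (∀ i, i < n → p i = true) := by
  by_cases h : ∀ i, i < n → p i = true
  · have h2 : ¬ ∃ i, i < n ∧ p i = false := by
      rintro ⟨i, hi, hpi⟩
      rw [h i hi] at hpi
      cases hpi
    rw [decide_eq_false h2, decide_eq_true h]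
    rfl
  · have h2 : ∃ i, i < n ∧ p i = false := by
      push_neg at h
      obtain ⟨i, hi, hpi⟩ := h
      exact ⟨i, hi, by rcases hv : p i <;> simp_all⟩
    rw [decide_eq_true h2, decide_eq_false h]
    rfl

lemma decide_bforall_false (n : ℕ) (p : ℕ → Bool) :
    decide (∀ i, i < n → p i = false) = !decide (∃ i, i < n ∧ p i = true) := by
  by_cases h : ∃ i, i < n ∧ p i = true
  · have h2 : ¬ ∀ i, i < n → p i = false := by
      intro hall
      obtain ⟨i, hi, hpi⟩ := h
      rw [hall i hi] at hpi
      cases hpi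
    rw [decide_eq_false h2, decide_eq_true h]
    rfl
  · have h2 : ∀ i, i < n → p i = false := by
      intro i hi
      rcases hv : p i
      · rfl
      · exact absurd ⟨i, hi, hv⟩ h
    rw [decide_eq_true h2, decide_eq_false h]
    rfl

noncomputable def vN (n : ℕ) : (ℕ → Bool) → Bool := fun x =>
  if x 0 = true then decide (∀ i, i < n → x i = true) else decide (∃ i, i < n ∧ x i = true)

lemma vN_mem {F : Set BFun} (hF : IsClone F) (hfin : HfinB F) (n : ℕ) :
    (⟨none, vN n⟩ : BFun) ∈ F := by
  refine memω_finDep_B hF hfin (show 0 < n + 1 by omega) _ ?_ ?_ ?_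
  · intro x x' hxx
    have h0' : x 0 = x' 0 := hxx 0 (by omega)
    have hfa : (∀ i, i < n → x i = true) ↔ (∀ i, i < n → x' i = true) := by
      constructor <;> intro hall i hi
      · rw [← hxx i (by omega)]; exact hall i hi
      · rw [hxx i (by omega)]; exact hall i hi
    have hex : (∃ i, i < n ∧ x i = true) ↔ (∃ i, i < n ∧ x' i = true) := by
      constructor <;> rintro ⟨i, hi, hpi⟩
      · exact ⟨i, hi, by rw [← hxx i (by omega)]; exact hpi⟩
      · exact ⟨i, hi, by rw [hxx i (by omega)]; exact hpi⟩
    simp only [vN, h0', hfa, hex]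
  · intro x
    rcases hx0 : x 0 <;>
      simp [vN, hx0, Bool.not_eq_true', decide_bexists_false, decide_bforall_false]
  · simp [vN]

lemma mem_of_plug {F : Set BFun} (hF : IsClone F) (g p : (ℕ → Bool) → Bool)
    (hp : (⟨none, p⟩ : BFun) ∈ F)
    (hHA : (⟨none, HA {x : ℕ → Bool | g x = true}⟩ : BFun) ∈ F)
    (hgsd : SDom g)
    (hcase1 : ∀ x, x 0 = false → p x = false → g x = false)
    (hcase2 : ∀ x, x 0 = true → p x = true → g x = true) :
    (⟨none, g⟩ : BFun) ∈ F := by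
  classical
  set A := {x : ℕ → Bool | g x = true} with hA
  set pl : ℕ → (ℕ → Bool) → Bool := fun j =>
    if j = 0 then (fun x => x 0) else if j = 1 then p else (fun x => x (j - 2)) with hpl
  have hplmem : ∀ j, (⟨none, pl j⟩ : BFun) ∈ F := by
    intro j
    by_cases h0 : j = 0
    · subst h0; simpa [hpl] using hF.proj none 0
    by_cases h1 : j = 1
    · subst h1; simpa [hpl] using hp
    · simpa [hpl, h0, h1] using hF.proj none (j - 2)
  have hcomp := hF.comp none none (HA A) pl hHA hplmem
  have he : g = fun x => HA A (fun j => pl j x) := by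
    funext x
    have e0 : pl 0 x = x 0 := by simp [hpl]
    have e1 : pl 1 x = p x := by simp [hpl]
    have etail : (fun k => (fun j => pl j x) (k + 2)) = x := by
      funext k; simp [hpl]
    have etailn : (fun k => !((fun j => pl j x) (k + 2))) = fun k => !(x k) := by
      funext k; simp [hpl]
    rcases hx0 : x 0 <;> rcases hpx : p x
    · rw [HA_def A (fun j => pl j x) (by show pl 0 x = pl 1 x; rw [e0, e1, hx0, hpx])]
      show g x = pl 0 x
      rw [e0, hx0, hcase1 x hx0 hpx]
    · rw [HA_01 A (fun j => pl j x) (by show pl 0 x = false; rw [e0, hx0])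
        (by show pl 1 x = true; rw [e1, hpx]), etailn]
      rcases hgx : g x <;>
        simp [hA, Set.mem_setOf_eq, hgsd x, hgx]
    · rw [HA_10 A (fun j => pl j x) (by show pl 0 x = true; rw [e0, hx0])
        (by show pl 1 x = false; rw [e1, hpx]), etail]
      rcases hgx : g x <;> simp [hA, Set.mem_setOf_eq, hgx]
    · rw [HA_def A (fun j => pl j x) (by show pl 0 x = pl 1 x; rw [e0, e1, hx0, hpx])]
      show g x = pl 0 x
      rw [e0, hx0, hcase2 x hx0 hpx]
  rw [he]
  exact hcomp

end BorelClonesAux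
namespace BorelClonesAux

lemma hfinA_of_res {F : Set BFun} (hres : finRes F = {f | finitary f ∧ SelfDual f}) :
    HfinA F := by
  intro n g hg
  have hmem : (⟨some n, g⟩ : BFun) ∈ finRes F := by
    rw [hres]
    exact ⟨fin_finitary n g, sd_of_sdom hg⟩
  exact hmem.1

lemma hfinB_of_res {F : Set BFun}
    (hres : finRes F = {f | finitary f ∧ SelfDual f ∧ PresBot f}) :
    HfinB F := by
  intro n g hg hpb
  have hmem : (⟨some n, g⟩ : BFun) ∈ finRes F := by
    rw [hres]
    exact ⟨fin_finitary n g, sd_of_sdom hg, hpb⟩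
  exact hmem.1

lemma classification_a (F : Set BFun) (hF : IsClone F) (hB : F ⊆ BorelClass)
    (hres : finRes F = {f | finitary f ∧ SelfDual f}) : F = D1 ∨ F = D2 := by
  classical
  have hfinA : HfinA F := hfinA_of_res hres
  have hsdall : ∀ f ∈ F, SelfDual f :=
    mem_SD hF (fun f hf => by rw [hres] at hf; exact hf.2)
  by_cases hcont : ∀ f ∈ F, IsContFun f
  · right
    apply Set.eq_of_subset_of_subset
    · intro f hf
      exact ⟨hcont f hf, hsdall f hf⟩
    · rintro ⟨a, φ⟩ ⟨hc, hsd⟩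
      cases a with
      | some n =>
        have hmem : (⟨some n, φ⟩ : BFun) ∈ finRes F := by
          rw [hres]; exact ⟨fin_finitary n φ, hsd⟩
        exact hmem.1
      | none => exact cont_memA hF hfinA φ hc hsd
  · left
    push_neg at hcont
    obtain ⟨⟨a, h⟩, hfF, hnc⟩ := hcont
    cases a with
    | some n => exact absurd (fin_cont h) hnc
    | none =>
    have hsd : SDom h := hsdall _ hfF
    obtain ⟨z, hz, happ⟩ := discont_point hsd hnc
    have hnegproj : ∀ i : ℕ, (⟨none, fun x : ℕ → Bool => !(x i)⟩ : BFun) ∈ F := by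
      intro i
      refine memω_finDep_A hF hfinA (show 0 < i + 1 by omega) _ ?_ ?_
      · intro x y hxy
        show (!(x i)) = (!(y i))
        rw [hxy i (by omega)]
      · intro x
        rfl
    set h' : (ℕ → Bool) → Bool :=
      fun x => h (fun i => if z i = true then !(x i) else x i) with hh'
    have hinner : ∀ i : ℕ,
        (⟨none, fun x : ℕ → Bool => if z i = true then !(x i) else x i⟩ : BFun) ∈ F := by
      intro i
      rcases hzi : z i
      · simpa [hzi] using hF.proj none i
      · simpa [hzi] using hnegproj i
    have hmem' : (⟨none, h'⟩ : BFun) ∈ F := by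
      have hc := hF.comp none none h
        (fun i => fun x : ℕ → Bool => if z i = true then !(x i) else x i) hfF hinner
      exact hc
    have hsd' : SDom h' := by
      intro x
      have he : (fun i => if z i = true then !((fun j => !(x j)) i) else (fun j => !(x j)) i)
          = fun i => !(if z i = true then !(x i) else x i) := by
        funext i; rcases hzi : z i <;> simp [hzi]
      show h (fun i => if z i = true then !((fun j => !(x j)) i) else (fun j => !(x j)) i)
          = !(h' x)
      rw [he, hsd (fun i => if z i = true then !(x i) else x i)]
    have h'0 : h' (fun _ => false) = false := by
      have he : (fun i => if z i = true then !((fun _ : ℕ => false) i)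
          else (fun _ : ℕ => false) i) = z := by
        funext i; rcases hzi : z i <;> simp [hzi]
      show h (fun i => if z i = true then !((fun _ : ℕ => false) i)
          else (fun _ : ℕ => false) i) = false
      rw [he]
      exact hz
    have happ' : ∀ n : ℕ, ∃ x : ℕ → Bool,
        (∀ i, i < n → x i = (fun _ : ℕ => false) i) ∧ h' x = true := by
      intro n
      obtain ⟨x, hx1, hx2⟩ := happ n
      refine ⟨fun i => if z i = true then !(x i) else x i, ?_, ?_⟩
      · intro i hi
        show (if z i = true then !(x i) else x i) = false
        rw [hx1 i hi]
        rcases hzi : z i <;> simp [hzi]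
      · have he : (fun i => if z i = true
            then !((fun j => if z j = true then !(x j) else x j) i)
            else (fun j => if z j = true then !(x j) else x j) i) = x := by
          funext i; rcases hzi : z i <;> simp [hzi]
        show h (fun i => if z i = true
            then !((fun j => if z j = true then !(x j) else x j) i)
            else (fun j => if z j = true then !(x j) else x j) i) = true
        rw [he]
        exact hx2
    have hSOr2 : (⟨none, SOr2⟩ : BFun) ∈ F :=
      SOr2_mem hF hfinA.toB h' hmem' hsd' h'0 (fun _ => false) h'0 happ'
    apply Set.eq_of_subset_of_subset
    · intro f hf
      exact ⟨hB hf, hsdall f hf⟩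
    · rintro ⟨a, φ⟩ ⟨hBor, hφsd⟩
      cases a with
      | some n =>
        have hmem : (⟨some n, φ⟩ : BFun) ∈ finRes F := by
          rw [hres]; exact ⟨fin_finitary n φ, hφsd⟩
        exact hmem.1
      | none =>
        refine mem_of_plug hF φ (fun x => !(x 0)) (hnegproj 0)
          (HA_mem hF hfinA.toB hSOr2 hBor) hφsd ?_ ?_
        · intro x h0 hp
          simp [h0] at hp
        · intro x h0 hp
          simp [h0] at hp

lemma classification_b (F : Set BFun) (hF : IsClone F) (hB : F ⊆ BorelClass)
    (hres : finRes F = {f | finitary f ∧ SelfDual f ∧ PresBot f}) :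
    F = DT1 ∨ F = DT2 ∨ F = DT3 := by
  classical
  have hfinB : HfinB F := hfinB_of_res hres
  have hsdall : ∀ f ∈ F, SelfDual f :=
    mem_SD hF (fun f hf => by rw [hres] at hf; exact hf.2.1)
  have hpball : ∀ f ∈ F, PresBot f :=
    mem_PresBot hF (fun f hf => by rw [hres] at hf; exact hf.2.2)
  by_cases hcont : ∀ f ∈ F, IsContFun f
  · right; right
    apply Set.eq_of_subset_of_subset
    · intro f hf
      exact ⟨hcont f hf, hsdall f hf, hpball f hf⟩
    · rintro ⟨a, φ⟩ ⟨hc, hsd, hpb⟩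
      cases a with
      | some n =>
        have hmem : (⟨some n, φ⟩ : BFun) ∈ finRes F := by
          rw [hres]; exact ⟨fin_finitary n φ, hsd, hpb⟩
        exact hmem.1
      | none => exact cont_memB hF hfinB φ hc hsd hpb
  · push_neg at hcont
    obtain ⟨⟨a, h⟩, hfF, hnc⟩ := hcont
    cases a with
    | some n => exact absurd (fin_cont h) hnc
    | none =>
    have hsd : SDom h := hsdall _ hfF
    have hpb : h (fun _ => false) = false := hpball _ hfF
    obtain ⟨z, hz, happ⟩ := discont_point hsd hnc
    have hSOr2 : (⟨none, SOr2⟩ : BFun) ∈ F :=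
      SOr2_mem hF hfinB h hfF hsd hpb z hz happ
    by_cases hvan : ∀ f ∈ F, VanishNearBot f
    · right; left
      apply Set.eq_of_subset_of_subset
      · intro f hf
        exact ⟨hB hf, hsdall f hf, hvan f hf⟩
      · rintro ⟨a, φ⟩ ⟨hBor, hφsd, hφv⟩
        cases a with
        | some n =>
          have hmem : (⟨some n, φ⟩ : BFun) ∈ finRes F := by
            rw [hres]; exact ⟨fin_finitary n φ, hφsd, (fin_vanish_iff φ).1 hφv⟩
          exact hmem.1
        | none =>
          obtain ⟨n, hn⟩ := (notMem_closure_iff_nat _ _).1 hφv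
          refine mem_of_plug hF φ (vN n) (vN_mem hF hfinB n)
            (HA_mem hF hfinB hSOr2 hBor) hφsd ?_ ?_
          · intro x h0 hp
            rcases hφx : φ x
            · rfl
            · exfalso
              obtain ⟨i, hi, hne⟩ := hn x hφx
              simp only [vN, h0] at hp
              rw [if_neg (by simp)] at hp
              simp only [decide_eq_false_iff_not] at hp
              apply hne
              rcases hxi : x i
              · rfl
              · exact absurd ⟨i, hi, hxi⟩ hp
          · intro x h0 hp
            simp [vN, h0] at hp
            have hneg : φ (fun i => !(x i)) = false := by
              rcases hφn : φ (fun i => !(x i))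
              · rfl
              · exfalso
                obtain ⟨i, hi, hne⟩ := hn _ hφn
                apply hne
                show (!(x i)) = false
                rw [hp i hi]
                rfl
            have hdual : φ (fun i => !(x i)) = !(φ x) := hφsd x
            rw [hneg] at hdual
            rcases hφx : φ x
            · exfalso
              rw [hφx] at hdual
              simp at hdual
            · rfl
    · left
      push_neg at hvan
      obtain ⟨⟨a0, h0⟩, hf0F, hf0nv⟩ := hvan
      cases a0 with
      | some n => exact absurd ((fin_vanish_iff h0).2 (hpball _ hf0F)) hf0nv
      | none =>
      have hsd0 : SDom h0 := hsdall _ hf0F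
      have hpb0 : h0 (fun _ => false) = false := hpball _ hf0F
      have happ0 : ∀ n : ℕ, ∃ x : ℕ → Bool, (∀ i, i < n → x i = false) ∧ h0 x = true := by
        intro n
        rw [VanishNearBot, notMem_closure_iff_nat] at hf0nv
        push_neg at hf0nv
        obtain ⟨x, hx1, hx2⟩ := hf0nv n
        refine ⟨x, fun i hi => ?_, hx1⟩
        have := hx2 i hi
        simpa using this
      have hwV : (⟨none, wV⟩ : BFun) ∈ F := wV_mem hF hfinB h0 hf0F hsd0 hpb0 happ0
      apply Set.eq_of_subset_of_subset
      · intro f hf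
        exact ⟨hB hf, hsdall f hf, hpball f hf⟩
      · rintro ⟨a, φ⟩ ⟨hBor, hφsd, hφpb⟩
        cases a with
        | some n =>
          have hmem : (⟨some n, φ⟩ : BFun) ∈ finRes F := by
            rw [hres]; exact ⟨fin_finitary n φ, hφsd, hφpb⟩
          exact hmem.1
        | none =>
          refine mem_of_plug hF φ wV hwV (HA_mem hF hfinB hSOr2 hBor) hφsd ?_ ?_
          · intro x hx0 hp
            simp only [wV, hx0] at hp
            rw [if_neg (by simp)] at hp
            simp only [decide_eq_false_iff_not] at hp
            have hx : x = fun _ => false := by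
              funext i
              rcases hxi : x i
              · rfl
              · exact absurd ⟨i, hxi⟩ hp
            rw [hx]
            exact hφpb
          · intro x hx0 hp
            simp [wV, hx0] at hp
            have hx : x = fun _ => true := by
              funext i; exact hp i
            rw [hx]
            exact sd_top hφsd hφpb

end BorelClonesAux
namespace BorelClonesAux

lemma D1_ne_D2 : D1 ≠ D2 := by
  intro h
  have hm : (⟨none, SOr2⟩ : BFun) ∈ D1 := ⟨SOr2_borel, SDom_SOr2⟩
  rw [h] at hm
  exact SOr2_not_continuous hm.1

lemma DT1_ne_DT2 : DT1 ≠ DT2 := by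
  intro h
  have hm : (⟨none, wV⟩ : BFun) ∈ DT1 := ⟨wV_borel, SDom_wV, wV_presbot⟩
  rw [h] at hm
  exact wV_not_vanish hm.2.2

lemma DT1_ne_DT3 : DT1 ≠ DT3 := by
  intro h
  have hm : (⟨none, SOr2⟩ : BFun) ∈ DT1 := ⟨SOr2_borel, SDom_SOr2, SOr2_presbot⟩
  rw [h] at hm
  exact SOr2_not_continuous hm.1

lemma DT2_ne_DT3 : DT2 ≠ DT3 := by
  intro h
  have hm : (⟨none, SOr2⟩ : BFun) ∈ DT2 := ⟨SOr2_borel, SDom_SOr2, SOr2_vanish⟩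
  rw [h] at hm
  exact SOr2_not_continuous hm.1

end BorelClonesAux

open BorelClonesAux in
theorem borel_clones_over_Dual_and_DualT0' :
    ((∀ C ∈ [D1, D2], IsClone C ∧ C ⊆ BorelClass ∧
        finRes C = {f | finitary f ∧ SelfDual f}) ∧
      D1 ≠ D2 ∧
      (∀ F : Set BFun, IsClone F → F ⊆ BorelClass →
        finRes F = {f | finitary f ∧ SelfDual f} → F = D1 ∨ F = D2)) ∧
    ((∀ C ∈ [DT1, DT2, DT3], IsClone C ∧ C ⊆ BorelClass ∧
        finRes C = {f | finitary f ∧ SelfDual f ∧ PresBot f}) ∧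
      List.Pairwise (· ≠ ·) [DT1, DT2, DT3] ∧
      (∀ F : Set BFun, IsClone F → F ⊆ BorelClass →
        finRes F = {f | finitary f ∧ SelfDual f ∧ PresBot f} →
        F = DT1 ∨ F = DT2 ∨ F = DT3)) := by
  refine ⟨⟨?_, D1_ne_D2, classification_a⟩, ⟨?_, ?_, classification_b⟩⟩
  · intro C hC
    simp only [List.mem_cons, List.not_mem_nil, or_false, List.mem_singleton] at hC
    rcases hC with rfl | rfl
    · exact ⟨isClone_D1, D1_subset_Borel, finRes_D1⟩
    · exact ⟨isClone_D2, D2_subset_Borel, finRes_D2⟩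
  · intro C hC
    simp only [List.mem_cons, List.not_mem_nil, or_false, List.mem_singleton] at hC
    rcases hC with rfl | rfl | rfl
    · exact ⟨isClone_DT1, DT1_subset_Borel, finRes_DT1⟩
    · exact ⟨isClone_DT2, DT2_subset_Borel, finRes_DT2⟩
    · exact ⟨isClone_DT3, DT3_subset_Borel, finRes_DT3⟩
  · refine List.Pairwise.cons ?_ (List.Pairwise.cons ?_ (List.pairwise_singleton _ _))
    · intro b hb
      simp only [List.mem_cons, List.not_mem_nil, or_false, List.mem_singleton] at hb
      rcases hb with rfl | rfl
      · exact DT1_ne_DT2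
      · exact DT1_ne_DT3
    · intro b hb
      simp only [List.mem_singleton] at hb
      subst hb
      exact DT2_ne_DT3


/-- (a) There are exactly two Borel clones whose finitary restriction is all finitary
self-dual functions: the Borel self-dual functions and the continuous self-dual functions.
(b) There are exactly three Borel clones whose finitary restriction is all finitary
self-dual `f` with `f(0⃗) = 0`:  the Borel self-dual ones with `f(0⃗) = 0`; the Borel
self-dual ones vanishing near `0⃗`; and the continuous self-dual ones with `f(0⃗) = 0`. -/
theorem borel_clones_over_Dual_and_DualT0 :
    ((∀ C ∈ [D1, D2], IsClone C ∧ C ⊆ BorelClass ∧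
        finRes C = {f | finitary f ∧ SelfDual f}) ∧
      D1 ≠ D2 ∧
      (∀ F : Set BFun, IsClone F → F ⊆ BorelClass →
        finRes F = {f | finitary f ∧ SelfDual f} → F = D1 ∨ F = D2)) ∧
    ((∀ C ∈ [DT1, DT2, DT3], IsClone C ∧ C ⊆ BorelClass ∧
        finRes C = {f | finitary f ∧ SelfDual f ∧ PresBot f}) ∧
      List.Pairwise (· ≠ ·) [DT1, DT2, DT3] ∧
      (∀ F : Set BFun, IsClone F → F ⊆ BorelClass →
        finRes F = {f | finitary f ∧ SelfDual f ∧ PresBot f} →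
        F = DT1 ∨ F = DT2 ∨ F = DT3)) := by
  exact borel_clones_over_Dual_and_DualT0'
end

section
/- There are exactly three Borel clones whose finitary restriction is the set of all finitary self-dual monotone Boolean functions: all Borel self-dual monotone functions (arities 1 ≤ n ≤ ω); all Borel self-dual monotone functions vanishing on a neighborhood of 0⃗ (equivalently, for self-dual f, also equal to 1 on a neighborhood of 1⃗); and all continuous self-dual monotone functions. -/
open scoped Classical

def DM1 : Set BFun := {f | IsBorelFun f ∧ SelfDual f ∧ Monotone f.2}
def DM2 : Set BFun := {f | IsBorelFun f ∧ SelfDual f ∧ Monotone f.2 ∧ VanishNearBot f}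
def DM3 : Set BFun := {f | IsContFun f ∧ SelfDual f ∧ Monotone f.2}


set_option maxHeartbeats 1600000

namespace BCP



abbrev Pt := ℕ → Bool

noncomputable def bigOr' : Pt → Bool := fun x => decide (∃ i, x i = true)
noncomputable def bigAnd' : Pt → Bool := fun x => decide (∀ i, x i = true)
noncomputable def liminf' : Pt → Bool := fun x => decide (∃ N, ∀ j, N ≤ j → x j = true)

def bmed (a b c : Bool) : Bool := (a && b) || (a && c) || (b && c)
def negp {ι : Type*} (x : ι → Bool) : ι → Bool := fun i => !(x i)
def tailf (x : Pt) : Pt := fun n => x (n + 1)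

@[simp] lemma negp_negp {ι : Type*} (x : ι → Bool) : negp (negp x) = x := by
  funext i; simp [negp]

lemma bmed_neg (a b c : Bool) : bmed (!a) (!b) (!c) = !(bmed a b c) := by
  cases a <;> cases b <;> cases c <;> rfl

lemma bmed_comm23 (a b c : Bool) : bmed a b c = bmed a c b := by
  cases a <;> cases b <;> cases c <;> rfl

lemma bmed_mono : ∀ {a a' b b' c c' : Bool}, a ≤ a' → b ≤ b' → c ≤ c' →
    bmed a b c ≤ bmed a' b' c' := by decide

lemma bmed_true (b c : Bool) : bmed true b c = (b || c) := by
  cases b <;> cases c <;> decide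

lemma bmed_false (b c : Bool) : bmed false b c = (b && c) := by
  cases b <;> cases c <;> decide

lemma tailf_negp (x : Pt) : tailf (negp x) = negp (tailf x) := rfl

@[simp] lemma bigOr_eq_true {x : Pt} : bigOr' x = true ↔ ∃ i, x i = true := by
  simp [bigOr']

@[simp] lemma bigAnd_eq_true {x : Pt} : bigAnd' x = true ↔ ∀ i, x i = true := by
  simp [bigAnd']

@[simp] lemma liminf_eq_true {x : Pt} : liminf' x = true ↔ ∃ N, ∀ j, N ≤ j → x j = true := by
  simp [liminf']

lemma bool_le_iff {a b : Bool} : a ≤ b ↔ (a = true → b = true) := Bool.le_iff_imp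

lemma le_iff_forall_imp {ι : Type*} {x y : ι → Bool} :
    x ≤ y ↔ ∀ i, x i = true → y i = true := by
  constructor
  · intro h i hx
    have hi := h i
    rw [hx] at hi
    exact bool_le_iff.1 hi rfl
  · intro h i
    rw [bool_le_iff]
    exact h i

lemma bigOr_negp (x : Pt) : bigOr' (negp x) = !(bigAnd' x) := by
  by_cases h : ∀ i, x i = true
  · have h1 : bigAnd' x = true := bigAnd_eq_true.2 h
    have h2 : bigOr' (negp x) = false := by
      simp only [bigOr', decide_eq_false_iff_not]
      rintro ⟨i, hi⟩
      rw [negp, h i] at hi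
      simp at hi
    rw [h1, h2]
    rfl
  · push_neg at h
    rcases h with ⟨i, hi⟩
    have hxi : x i = false := by
      cases hxi : x i
      · rfl
      · exact absurd hxi hi
    have h1 : bigAnd' x = false := by
      simp only [bigAnd', decide_eq_false_iff_not]
      intro hall
      rw [hall i] at hxi
      simp at hxi
    have h2 : bigOr' (negp x) = true := by
      refine bigOr_eq_true.2 ⟨i, ?_⟩
      simp [negp, hxi]
    rw [h1, h2]
    rfl

lemma bigAnd_negp (x : Pt) : bigAnd' (negp x) = !(bigOr' x) := by
  have h := bigOr_negp (negp x)
  rw [negp_negp] at h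
  cases hb : bigOr' x <;> rw [hb] at h <;> revert h <;>
    cases bigAnd' (negp x) <;> decide

lemma bigOr_mono : Monotone bigOr' := by
  intro x y h
  rw [bool_le_iff]
  intro hx
  rcases bigOr_eq_true.1 hx with ⟨i, hi⟩
  exact bigOr_eq_true.2 ⟨i, le_iff_forall_imp.1 h i hi⟩

lemma bigAnd_mono : Monotone bigAnd' := by
  intro x y h
  rw [bool_le_iff]
  intro hx
  exact bigAnd_eq_true.2 fun i => le_iff_forall_imp.1 h i (bigAnd_eq_true.1 hx i)

lemma liminf_mono : Monotone liminf' := by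
  intro x y h
  rw [bool_le_iff]
  intro hx
  rcases liminf_eq_true.1 hx with ⟨N, hN⟩
  exact liminf_eq_true.2 ⟨N, fun j hj => le_iff_forall_imp.1 h j (hN j hj)⟩

noncomputable def limsup' : Pt → Bool := fun x => !(liminf' (negp x))

lemma limsup_mono : Monotone limsup' := by
  intro x y h
  have h2 : negp y ≤ negp x := by
    intro i
    have hi := h i
    revert hi
    simp only [negp]
    cases x i <;> cases y i <;> simp
  have := liminf_mono h2
  revert this
  unfold limsup'
  cases liminf' (negp x) <;> cases liminf' (negp y) <;> decide

lemma liminf_negp (x : Pt) : liminf' (negp x) = !(limsup' x) := by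
  simp [limsup']

lemma limsup_negp (x : Pt) : limsup' (negp x) = !(liminf' x) := by
  simp [limsup', negp_negp]

/- measurability helpers -/
lemma measurable_of_mset {α : Type*} [MeasurableSpace α] {f : α → Bool}
    (h : MeasurableSet {a | f a = true}) : Measurable f := by
  apply measurable_to_countable'
  intro y
  cases y
  · have h2 : (f ⁻¹' {false}) = {a | f a = true}ᶜ := by
      ext a
      simp
    rw [h2]
    exact h.compl
  · have h2 : (f ⁻¹' {true}) = {a | f a = true} := by
      ext a
      simp
    rw [h2]
    exact h

lemma mset_of_measurable {α : Type*} [MeasurableSpace α] {f : α → Bool}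
    (h : Measurable f) : MeasurableSet {a | f a = true} :=
  h (measurableSet_singleton true)

lemma measurable_coord (i : ℕ) : Measurable (fun x : Pt => x i) := measurable_pi_apply i

lemma measurable_bigOr : Measurable bigOr' := by
  apply measurable_of_mset
  have : {x : Pt | bigOr' x = true} = ⋃ i, {x : Pt | x i = true} := by
    ext x; simp
  rw [this]
  exact MeasurableSet.iUnion fun i => mset_of_measurable (measurable_coord i)

lemma measurable_bigAnd : Measurable bigAnd' := by
  apply measurable_of_mset
  have : {x : Pt | bigAnd' x = true} = ⋂ i, {x : Pt | x i = true} := by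
    ext x; simp
  rw [this]
  exact MeasurableSet.iInter fun i => mset_of_measurable (measurable_coord i)

lemma measurable_liminf : Measurable liminf' := by
  apply measurable_of_mset
  have : {x : Pt | liminf' x = true} = ⋃ N, ⋂ j, ⋂ (_ : N ≤ j), {x : Pt | x j = true} := by
    ext x; simp
  rw [this]
  exact MeasurableSet.iUnion fun N => MeasurableSet.iInter fun j =>
    MeasurableSet.iInter fun _ => mset_of_measurable (measurable_coord j)

lemma measurable_negp : Measurable (negp (ι := ℕ)) := by
  apply measurable_pi_lambda
  intro i
  exact (measurable_of_countable _).comp (measurable_pi_apply i)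

lemma measurable_tailf : Measurable tailf := by
  apply measurable_pi_lambda
  intro i
  exact measurable_pi_apply (i + 1)

lemma measurable_limsup : Measurable limsup' := by
  have h1 : Measurable (fun x : Pt => liminf' (negp x)) := measurable_liminf.comp measurable_negp
  exact (measurable_of_countable _).comp h1

lemma measurable_bmed3 {α : Type*} [MeasurableSpace α] {f g h : α → Bool}
    (hf : Measurable f) (hg : Measurable g) (hh : Measurable h) :
    Measurable (fun a => bmed (f a) (g a) (h a)) := by
  have : Measurable (fun a => ((f a, g a), h a)) := (hf.prodMk hg).prodMk hh
  exact (measurable_of_countable (fun p : (Bool × Bool) × Bool => bmed p.1.1 p.1.2 p.2)).comp this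


lemma negp_antitone {ι : Type*} : ∀ {x y : ι → Bool}, x ≤ y → negp y ≤ negp x := by
  intro x y h i
  have hi := h i
  revert hi
  simp only [negp]
  cases x i <;> cases y i <;> simp

lemma continuous_negp {ι : Type*} : Continuous (negp (ι := ι)) := by
  refine continuous_pi fun i => ?_
  exact (continuous_of_discreteTopology (f := not)).comp (continuous_apply i)

lemma not_le_iff {ι : Type*} {x y : ι → Bool} :
    ¬ x ≤ y ↔ ∃ i, x i = true ∧ y i = false := by
  rw [le_iff_forall_imp]
  push_neg
  constructor
  · rintro ⟨i, h1, h2⟩; exact ⟨i, h1, by simpa using h2⟩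
  · rintro ⟨i, h1, h2⟩; exact ⟨i, h1, by simp [h2]⟩

lemma notMem_closure_iff {ι : Type*} (S : Set (ι → Bool)) (z : ι → Bool) :
    z ∉ closure S ↔ ∃ I : Finset ι, ∀ x, (∀ i ∈ I, x i = z i) → x ∉ S := by
  constructor
  · intro h
    have : ∃ o : Set (ι → Bool), IsOpen o ∧ z ∈ o ∧ o ∩ S = ∅ := by
      by_contra hc
      push_neg at hc
      apply h
      rw [mem_closure_iff]
      intro o ho hz
      exact hc o ho hz
    rcases this with ⟨o, ho, hz, hoS⟩
    rcases isOpen_pi_iff.1 ho z hz with ⟨I, u, hu, hsub⟩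
    refine ⟨I, fun x hx hxS => ?_⟩
    have hxo : x ∈ o := by
      apply hsub
      intro i hi
      rw [hx i hi]
      exact (hu i hi).2
    have : x ∈ o ∩ S := ⟨hxo, hxS⟩
    rw [hoS] at this
    exact this
  · rintro ⟨I, hI⟩
    intro hcl
    have ho : IsOpen {x : ι → Bool | ∀ i ∈ I, x i = z i} := by
      have : {x : ι → Bool | ∀ i ∈ I, x i = z i} = (I : Set ι).pi (fun i => {z i}) := by
        ext x; simp [Set.mem_pi]
      rw [this]
      exact isOpen_set_pi I.finite_toSet (fun i _ => isOpen_discrete _)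
    rcases mem_closure_iff.1 hcl _ ho (fun i _ => rfl) with ⟨x, hx1, hx2⟩
    exact hI x hx1 hx2



/-! ### basic self-dual/monotone facts -/

lemma sd_top {ι : Type*} {w : (ι → Bool) → Bool}
    (hsd : ∀ x, w (fun i => !(x i)) = !(w x)) (hm : Monotone w) :
    w (fun _ => true) = true := by
  have h1 : (fun _ : ι => false) ≤ (fun _ : ι => true) := by
    intro i
    show (false : Bool) ≤ true
    decide
  have h2 := hm h1
  have h3 : w (fun _ : ι => true) = !(w (fun _ : ι => false)) := hsd (fun _ => false)
  rw [h3] at h2 ⊢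
  revert h2
  cases w (fun _ : ι => false) <;> decide

lemma sd_bot {ι : Type*} {w : (ι → Bool) → Bool}
    (hsd : ∀ x, w (fun i => !(x i)) = !(w x)) (hm : Monotone w) :
    w (fun _ => false) = false := by
  have h3 : w (fun _ : ι => true) = !(w (fun _ : ι => false)) := hsd (fun _ => false)
  have h4 := sd_top hsd hm
  rw [h4] at h3
  cases hb : w (fun _ : ι => false)
  · rfl
  · rw [hb] at h3; simp at h3

/-- a continuous self-dual monotone function vanishes near `0⃗` -/
lemma vanish_of_cont (f : BFun) (hc : IsContFun f) (hsd : SelfDual f) (hm : Monotone f.2) :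
    VanishNearBot f := by
  have hcl : IsClosed {x | f.2 x = true} := by
    have : {x | f.2 x = true} = f.2 ⁻¹' {true} := rfl
    rw [this]
    exact (isClosed_discrete _).preimage hc
  rw [VanishNearBot, hcl.closure_eq]
  simp only [Set.mem_setOf_eq]
  rw [sd_bot hsd hm]
  simp

/-! ### the three classes are clones -/

lemma isClone_DM1 : IsClone DM1 := by
  constructor
  · intro a i
    refine ⟨mset_of_measurable (measurable_pi_apply i), fun x => rfl, fun x y h => h i⟩
  · intro a b g f hg hf
    obtain ⟨hgB, hgS, hgM⟩ := hg
    refine ⟨?_, ?_, ?_⟩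
    · have hgm : Measurable g := measurable_of_mset hgB
      have hfm : Measurable fun (x : Idx b → Bool) i => f i x :=
        measurable_pi_lambda _ (fun i => measurable_of_mset (hf i).1)
      exact mset_of_measurable (hgm.comp hfm)
    · intro x
      show g (fun i => f i (fun j => !(x j))) = !(g (fun i => f i x))
      have : (fun i => f i (fun j => !(x j))) = (fun i => !((fun i => f i x) i)) := by
        funext i
        exact (hf i).2.1 x
      rw [this]
      exact hgS (fun i => f i x)
    · intro x y h
      exact hgM (fun i => (hf i).2.2 h)

lemma isClone_DM2 : IsClone DM2 := by
  constructor
  · intro a i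
    refine ⟨mset_of_measurable (measurable_pi_apply i), fun x => rfl, fun x y h => h i, ?_⟩
    rw [VanishNearBot, notMem_closure_iff]
    refine ⟨{i}, fun x hx hmem => ?_⟩
    have h1 := hx i (Finset.mem_singleton_self i)
    simp only [Set.mem_setOf_eq] at hmem
    rw [hmem] at h1
    simp at h1
  · intro a b g f hg hf
    obtain ⟨hgB, hgS, hgM, hgV⟩ := hg
    have h1 := isClone_DM1.comp a b g f ⟨hgB, hgS, hgM⟩ (fun i => ⟨(hf i).1, (hf i).2.1, (hf i).2.2.1⟩)
    refine ⟨h1.1, h1.2.1, h1.2.2, ?_⟩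
    rw [VanishNearBot, notMem_closure_iff] at hgV ⊢
    rcases hgV with ⟨I, hI⟩
    have hfV : ∀ i : Idx a, ∃ J : Finset (Idx b), ∀ x, (∀ j ∈ J, x j = false) → f i x = false := by
      intro i
      rcases (notMem_closure_iff _ _).1 (hf i).2.2.2 with ⟨J, hJ⟩
      refine ⟨J, fun x hx => ?_⟩
      have := hJ x hx
      simp only [Set.mem_setOf_eq] at this
      exact Bool.not_eq_true _ ▸ (by revert this; cases f i x <;> simp)
    choose J hJ using hfV
    refine ⟨I.biUnion J, fun x hx hmem => ?_⟩
    simp only [Set.mem_setOf_eq] at hmem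
    refine hI (fun i => f i x) (fun i hi => ?_) hmem
    refine hJ i x (fun j hj => ?_)
    exact hx j (Finset.mem_biUnion.2 ⟨i, hi, hj⟩)

lemma isClone_DM3 : IsClone DM3 := by
  constructor
  · intro a i
    exact ⟨continuous_apply i, fun x => rfl, fun x y h => h i⟩
  · intro a b g f hg hf
    refine ⟨?_, ?_, ?_⟩
    · exact hg.1.comp (continuous_pi fun i => (hf i).1)
    · intro x
      show g (fun i => f i (fun j => !(x j))) = !(g (fun i => f i x))
      have : (fun i => f i (fun j => !(x j))) = (fun i => !((fun i => f i x) i)) := by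
        funext i
        exact (hf i).2.1 x
      rw [this]
      exact hg.2.1 (fun i => f i x)
    · intro x y h
      exact hg.2.2 (fun i => (hf i).2.2 h)

/-! ### finitary restrictions -/

lemma finitary_all_measurable {n : ℕ+} (s : Set (Fin (n : ℕ) → Bool)) : MeasurableSet s :=
  (Set.to_countable s).measurableSet

lemma finRes_DM1 : finRes DM1 = {f | finitary f ∧ SelfDual f ∧ Monotone f.2} := by
  ext f
  constructor
  · rintro ⟨⟨hB, hS, hM⟩, hfin⟩
    exact ⟨hfin, hS, hM⟩
  · rintro ⟨hfin, hS, hM⟩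
    rcases f with ⟨a, w⟩
    cases a with
    | none => exact absurd rfl hfin
    | some n =>
      exact ⟨⟨finitary_all_measurable _, hS, hM⟩, hfin⟩

lemma finRes_DM3 : finRes DM3 = {f | finitary f ∧ SelfDual f ∧ Monotone f.2} := by
  ext f
  constructor
  · rintro ⟨⟨hC, hS, hM⟩, hfin⟩
    exact ⟨hfin, hS, hM⟩
  · rintro ⟨hfin, hS, hM⟩
    rcases f with ⟨a, w⟩
    cases a with
    | none => exact absurd rfl hfin
    | some n =>
      exact ⟨⟨continuous_of_discreteTopology, hS, hM⟩, hfin⟩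

lemma finRes_DM2 : finRes DM2 = {f | finitary f ∧ SelfDual f ∧ Monotone f.2} := by
  ext f
  constructor
  · rintro ⟨⟨hB, hS, hM, hV⟩, hfin⟩
    exact ⟨hfin, hS, hM⟩
  · rintro ⟨hfin, hS, hM⟩
    rcases f with ⟨a, w⟩
    cases a with
    | none => exact absurd rfl hfin
    | some n =>
      refine ⟨⟨finitary_all_measurable _, hS, hM, ?_⟩, hfin⟩
      exact vanish_of_cont ⟨some n, w⟩ continuous_of_discreteTopology hS hM

/-! ### part 3 : duality of the two vanishing conditions -/

lemma false_of_ne_true {b : Bool} (h : ¬ b = true) : b = false := by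
  cases b
  · rfl
  · exact absurd rfl h

lemma vanish_iff_oneNearTop (f : BFun) (hsd : SelfDual f) :
    VanishNearBot f ↔ OneNearTop f := by
  rw [VanishNearBot, OneNearTop, notMem_closure_iff, notMem_closure_iff]
  constructor
  · rintro ⟨I, hI⟩
    refine ⟨I, fun x hx hmem => ?_⟩
    simp only [Set.mem_setOf_eq] at hmem
    have hy : ∀ i ∈ I, (fun j => !(x j)) i = (fun _ => false) i := by
      intro i hi
      have := hx i hi
      simp only at this ⊢
      rw [this]
      rfl
    have := hI _ hy
    simp only [Set.mem_setOf_eq, hsd x, hmem] at this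
    exact this rfl
  · rintro ⟨I, hI⟩
    refine ⟨I, fun x hx hmem => ?_⟩
    simp only [Set.mem_setOf_eq] at hmem
    have hy : ∀ i ∈ I, (fun j => !(x j)) i = (fun _ => true) i := by
      intro i hi
      have := hx i hi
      simp only at this ⊢
      rw [this]
      rfl
    have := hI _ hy
    simp only [Set.mem_setOf_eq, hsd x, hmem] at this
    exact this rfl



instance instOpensMeasIdx (a : Arity) : OpensMeasurableSpace (Idx a → Bool) := by
  cases a <;> infer_instance

/-! ### witness functions for part 2 -/

noncomputable def eFn : Pt → Bool := fun x => bmed (x 0) (bigOr' (tailf x)) (bigAnd' (tailf x))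

noncomputable def eB : BFun := ⟨none, eFn⟩

noncomputable def m0Fn : Pt → Bool := fun x => bmed (x 0) (limsup' (tailf x)) (liminf' (tailf x))

noncomputable def m0B : BFun := ⟨none, m0Fn⟩

lemma tailf_mono {x y : Pt} (h : x ≤ y) : tailf x ≤ tailf y := fun n => h (n + 1)

lemma eFn_sd : ∀ x, eFn (fun i => !(x i)) = !(eFn x) := by
  intro x
  show bmed (!(x 0)) (bigOr' (tailf (negp x))) (bigAnd' (tailf (negp x))) = !(eFn x)
  rw [tailf_negp, bigOr_negp, bigAnd_negp, bmed_comm23, bmed_neg]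
  rfl

lemma eFn_mono : Monotone eFn := by
  intro x y h
  exact bmed_mono (h 0) (bigOr_mono (tailf_mono h)) (bigAnd_mono (tailf_mono h))

lemma eFn_measurable : Measurable eFn :=
  measurable_bmed3 (measurable_coord 0) (measurable_bigOr.comp measurable_tailf)
    (measurable_bigAnd.comp measurable_tailf)

lemma eB_mem_DM2 : eB ∈ DM2 := by
  refine ⟨mset_of_measurable eFn_measurable, eFn_sd, eFn_mono, ?_⟩
  show (fun _ => false) ∉ closure {x : Pt | eFn x = true}
  rw [notMem_closure_iff]
  refine ⟨{0, 1}, fun x hx hmem => ?_⟩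
  have h0 : x 0 = false := hx 0 (by simp)
  have h1 : x 1 = false := hx 1 (by simp)
  simp only [Set.mem_setOf_eq] at hmem
  have hAnd : bigAnd' (tailf x) = false := by
    simp only [bigAnd', decide_eq_false_iff_not]
    intro hall
    have h2 : x 1 = true := hall 0
    rw [h1] at h2
    simp at h2
  rw [show eFn x = bmed (x 0) (bigOr' (tailf x)) (bigAnd' (tailf x)) from rfl, h0, bmed_false,
    hAnd] at hmem
  simp at hmem

lemma eB_not_cont : ¬ IsContFun eB := by
  intro hc0
  have hc : Continuous eFn := hc0
  have hopen : IsOpen (eFn ⁻¹' {false}) := (isOpen_discrete _).preimage hc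
  set a : Pt := fun i => decide (i = 0) with ha
  have haU : a ∈ eFn ⁻¹' {false} := by
    have h1 : bigOr' (tailf a) = false := by
      simp only [bigOr', decide_eq_false_iff_not]
      rintro ⟨i, hi⟩
      simp [ha, tailf] at hi
    have h2 : bigAnd' (tailf a) = false := by
      simp only [bigAnd', decide_eq_false_iff_not]
      intro hall
      have := hall 0
      simp [ha, tailf] at this
    show eFn a = false
    show bmed (a 0) (bigOr' (tailf a)) (bigAnd' (tailf a)) = false
    rw [h1, h2]
    simp [ha, bmed]
  rcases isOpen_pi_iff.1 hopen a haU with ⟨I, u, hu, hsub⟩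
  set k : ℕ := I.sup id + 1 with hk
  set y : Pt := fun i => decide (i = 0 ∨ k ≤ i) with hy
  have hyU : y ∈ eFn ⁻¹' {false} := by
    apply hsub
    intro i hi
    have hik : i < k := Nat.lt_succ_of_le (Finset.le_sup (f := id) hi)
    have : y i = a i := by
      simp only [hy, ha]
      congr 1
      simp only [eq_iff_iff, or_iff_left_iff_imp]
      intro hki
      exact absurd (lt_of_lt_of_le hik hki) (lt_irrefl i)
    rw [this]
    exact (hu i hi).2
  have : eFn y = true := by
    have h0 : y 0 = true := by simp [hy]
    have hOr : bigOr' (tailf y) = true := by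
      refine bigOr_eq_true.2 ⟨k, ?_⟩
      simp only [hy, tailf, decide_eq_true_eq]
      right
      omega
    show bmed (y 0) (bigOr' (tailf y)) (bigAnd' (tailf y)) = true
    rw [h0, hOr, bmed_true]
    simp
  rw [Set.mem_preimage, Set.mem_singleton_iff, this] at hyU
  simp at hyU

lemma m0Fn_sd : ∀ x, m0Fn (fun i => !(x i)) = !(m0Fn x) := by
  intro x
  show bmed (!(x 0)) (limsup' (tailf (negp x))) (liminf' (tailf (negp x))) = !(m0Fn x)
  rw [tailf_negp, limsup_negp, liminf_negp, bmed_comm23, bmed_neg]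
  rfl

lemma m0Fn_mono : Monotone m0Fn := by
  intro x y h
  exact bmed_mono (h 0) (limsup_mono (tailf_mono h)) (liminf_mono (tailf_mono h))

lemma m0B_mem_DM1 : m0B ∈ DM1 :=
  ⟨mset_of_measurable (measurable_bmed3 (measurable_coord 0)
      (measurable_limsup.comp measurable_tailf) (measurable_liminf.comp measurable_tailf)),
    m0Fn_sd, m0Fn_mono⟩

lemma m0B_not_vanish : ¬ VanishNearBot m0B := by
  intro h0
  have h1 : (fun _ => false) ∉ closure {x : Pt | m0Fn x = true} := h0
  rw [notMem_closure_iff] at h1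
  rcases h1 with ⟨I, hI⟩
  set k : ℕ := I.sup id + 1 with hk
  set z : Pt := fun i => decide (k ≤ i) with hz
  have hagree : ∀ i ∈ I, z i = (fun _ => false) i := by
    intro i hi
    have hik : i < k := Nat.lt_succ_of_le (Finset.le_sup (f := id) hi)
    simp only [hz, decide_eq_false_iff_not]
    omega
  apply hI z hagree
  show m0Fn z = true
  have h0 : z 0 = false := by
    simp only [hz, decide_eq_false_iff_not]
    omega
  have hL : liminf' (tailf z) = true := by
    refine liminf_eq_true.2 ⟨k, fun j hj => ?_⟩
    simp only [tailf, hz, decide_eq_true_eq]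
    omega
  have hS : limsup' (tailf z) = true := by
    show (!(liminf' (negp (tailf z)))) = true
    have : liminf' (negp (tailf z)) = false := by
      simp only [liminf', decide_eq_false_iff_not]
      rintro ⟨N, hN⟩
      have := hN (max N k) (le_max_left _ _)
      simp only [negp, tailf, hz] at this
      have hdec : decide (k ≤ max N k + 1) = true := by
        simp only [decide_eq_true_eq]
        omega
      rw [hdec] at this
      simp at this
    rw [this]
    rfl
  show bmed (z 0) (limsup' (tailf z)) (liminf' (tailf z)) = true
  rw [h0, hL, hS, bmed_false]
  rfl

/-- DM3 ⊆ DM2 -/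
lemma DM3_subset_DM2 : DM3 ⊆ DM2 := by
  rintro f ⟨hc, hsd, hm⟩
  refine ⟨?_, hsd, hm, vanish_of_cont f hc hsd hm⟩
  have hcl : IsClosed {x | f.2 x = true} := by
    have h2 : {x | f.2 x = true} = f.2 ⁻¹' {true} := rfl
    rw [h2]
    exact (isClosed_discrete _).preimage hc
  exact hcl.measurableSet

lemma DM1_ne_DM2 : DM1 ≠ DM2 := by
  intro h
  have := m0B_mem_DM1
  rw [h] at this
  exact m0B_not_vanish this.2.2.2

lemma DM2_ne_DM3 : DM2 ≠ DM3 := by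
  intro h
  have := eB_mem_DM2
  rw [h] at this
  exact eB_not_cont this.1

lemma DM1_ne_DM3 : DM1 ≠ DM3 := by
  intro h
  have := m0B_mem_DM1
  rw [h] at this
  exact m0B_not_vanish (DM3_subset_DM2 this).2.2.2



def SMspec : Set BFun := {f | finitary f ∧ SelfDual f ∧ Monotone f.2}

lemma mem_of_fin {F : Set BFun} (hfin : finRes F = SMspec) (n : ℕ+)
    (w : (Fin (n : ℕ) → Bool) → Bool) (hsd : ∀ x, w (fun i => !(x i)) = !(w x))
    (hm : Monotone w) : (⟨some n, w⟩ : BFun) ∈ F := by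
  have h1 : (⟨some n, w⟩ : BFun) ∈ SMspec := ⟨(fun h => by cases h), hsd, hm⟩
  rw [← hfin] at h1
  exact h1.1

lemma mem_reindex {F : Set BFun} (hcl : IsClone F) {b : Arity} (c : Arity)
    {w : (Idx b → Bool) → Bool} (σ : Idx b → Idx c) (hw : (⟨b, w⟩ : BFun) ∈ F) :
    (⟨c, fun x => w (fun i => x (σ i))⟩ : BFun) ∈ F :=
  hcl.comp b c w (fun i x => x (σ i)) hw (fun i => hcl.proj c (σ i))

lemma finRes_sub {F : Set BFun} (hfin : finRes F = SMspec) {f : BFun} (hf : f ∈ F)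
    (hfi : finitary f) : SelfDual f ∧ Monotone f.2 := by
  have h1 : f ∈ finRes F := ⟨hf, hfi⟩
  rw [hfin] at h1
  exact ⟨h1.2.1, h1.2.2⟩

/-- every member of a clone with the right finitary restriction is self-dual -/
lemma F_sd {F : Set BFun} (hcl : IsClone F) (hfin : finRes F = SMspec) {b : Arity}
    {w : (Idx b → Bool) → Bool} (hw : (⟨b, w⟩ : BFun) ∈ F) :
    ∀ x, w (fun i => !(x i)) = !(w x) := by
  intro x
  set σ : Idx b → Idx (some 2) := fun i => if x i = true then (1 : Fin 2) else 0 with hσ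
  have h2 : (⟨some 2, fun v => w (fun i => v (σ i))⟩ : BFun) ∈ F :=
    mem_reindex hcl (some 2) σ hw
  have hsd := (finRes_sub hfin h2 (fun h => by cases h)).1
  set v₁ : Fin 2 → Bool := fun j => decide (j = (1 : Fin 2)) with hv₁
  have hA : (fun i => v₁ (σ i)) = x := by
    funext i
    cases hxi : x i
    · simp only [hσ, hxi, hv₁]
      decide
    · simp only [hσ, hxi, hv₁]
      decide
  have hB : (fun i => (fun j => !(v₁ j)) (σ i)) = (fun i => !(x i)) := by
    funext i
    have := congrFun hA i
    simp only [← this]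
  have hkey := hsd v₁
  simp only [Set.mem_setOf_eq] at hkey
  calc w (fun i => !(x i)) = w (fun i => (fun j => !(v₁ j)) (σ i)) := by rw [hB]
    _ = !(w (fun i => v₁ (σ i))) := hkey
    _ = !(w x) := by rw [hA]

/-- every member is monotone -/
lemma F_mono {F : Set BFun} (hcl : IsClone F) (hfin : finRes F = SMspec) {b : Arity}
    {w : (Idx b → Bool) → Bool} (hw : (⟨b, w⟩ : BFun) ∈ F) : Monotone w := by
  intro x y hxy
  set σ : Idx b → Idx (some 3) :=
    fun i => if x i = true then (2 : Fin 3) else if y i = true then 1 else 0 with hσ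
  have h3 : (⟨some 3, fun v => w (fun i => v (σ i))⟩ : BFun) ∈ F :=
    mem_reindex hcl (some 3) σ hw
  have hm := (finRes_sub hfin h3 (fun h => by cases h)).2
  set v₁ : Fin 3 → Bool := fun j => decide (j = (2 : Fin 3)) with hv₁
  set v₂ : Fin 3 → Bool := fun j => decide (j = (2 : Fin 3) ∨ j = 1) with hv₂
  have hv : v₁ ≤ v₂ := by
    intro j
    fin_cases j <;> simp [hv₁, hv₂]
  have hA : (fun i => v₁ (σ i)) = x := by
    funext i
    cases hxi : x i
    · cases hyi : y i <;> simp only [hσ, hxi, hyi, hv₁] <;> decide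
    · simp only [hσ, hxi, hv₁, ↓reduceIte]
      decide
  have hB : (fun i => v₂ (σ i)) = y := by
    funext i
    cases hxi : x i
    · cases hyi : y i <;> simp only [hσ, hxi, hyi, hv₂] <;> decide
    · have hyi : y i = true := le_iff_forall_imp.1 hxy i hxi
      simp only [hσ, hxi, hyi, hv₂]
      decide
  have := hm hv
  simp only [Set.mem_setOf_eq] at this
  rw [hA, hB] at this
  exact this

/-- continuous functions on `2^ω` have finite support -/
lemma cont_finite_support (w : Pt → Bool) (hc : Continuous w) :
    ∃ k : ℕ, ∀ x y : Pt, (∀ i < k, x i = y i) → w x = w y := by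
  have hP : ∀ z : Pt, ∃ I : Finset ℕ, ∀ y : Pt, (∀ i ∈ I, y i = z i) → w y = w z := by
    intro z
    have hopen : IsOpen (w ⁻¹' {w z}) := (isOpen_discrete _).preimage hc
    rcases isOpen_pi_iff.1 hopen z rfl with ⟨I, u, hu, hsub⟩
    refine ⟨I, fun y hy => ?_⟩
    have : y ∈ w ⁻¹' {w z} := by
      apply hsub
      intro i hi
      rw [hy i hi]
      exact (hu i hi).2
    exact this
  choose I hI using hP
  set U : Pt → Set Pt := fun z => {y | ∀ i ∈ I z, y i = z i} with hU
  have hUopen : ∀ z, IsOpen (U z) := by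
    intro z
    have : U z = (↑(I z) : Set ℕ).pi (fun i => {z i}) := by
      ext y; simp [hU, Set.mem_pi]
    rw [this]
    exact isOpen_set_pi (I z).finite_toSet (fun i _ => isOpen_discrete _)
  have hcov : (Set.univ : Set Pt) ⊆ ⋃ z, U z := by
    intro y _
    exact Set.mem_iUnion.2 ⟨y, fun i _ => rfl⟩
  obtain ⟨t, ht⟩ := isCompact_univ.elim_finite_subcover U hUopen hcov
  refine ⟨(t.sup (fun z => (I z).sup id)) + 1, fun x y hxy => ?_⟩
  rcases Set.mem_iUnion₂.1 (ht (Set.mem_univ x)) with ⟨z, hz, hxz⟩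
  have h1 : w x = w z := hI z x hxz
  have h2 : w y = w z := by
    apply hI z y
    intro i hi
    have hik : i < t.sup (fun z => (I z).sup id) + 1 := by
      have h3 : i ≤ (I z).sup id := Finset.le_sup (f := id) hi
      have h4 : (I z).sup id ≤ t.sup (fun z => (I z).sup id) := Finset.le_sup (f := fun z => (I z).sup id) hz
      omega
    rw [← hxy i hik]
    exact hxz i hi
  rw [h1, h2]

/-- `DM3 ⊆ F` -/
lemma DM3_sub_F {F : Set BFun} (hcl : IsClone F) (hfin : finRes F = SMspec) : DM3 ⊆ F := by
  rintro ⟨a, w⟩ ⟨hc, hsd, hm⟩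
  cases a with
  | some n => exact mem_of_fin hfin n w hsd hm
  | none =>
    simp only at hc hsd hm
    obtain ⟨k, hk⟩ := cont_finite_support w hc
    set n : ℕ+ := ⟨k + 1, Nat.succ_pos k⟩ with hn
    set ext : (Fin (k+1) → Bool) → Pt := fun v i => if h : i < k + 1 then v ⟨i, h⟩ else false
      with hext
    set g : (Fin (k+1) → Bool) → Bool := fun v => w (ext v) with hg
    have hgsd : ∀ v, g (fun j => !(v j)) = !(g v) := by
      intro v
      have h1 : w (ext (fun j => !(v j))) = w (fun i => !(ext v i)) := by
        apply hk
        intro i hik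
        have h : i < k + 1 := by omega
        show (if h' : i < k + 1 then !(v ⟨i, h'⟩) else false)
            = !(if h' : i < k + 1 then v ⟨i, h'⟩ else false)
        rw [dif_pos h, dif_pos h]
      show w (ext (fun j => !(v j))) = !(w (ext v))
      rw [h1]
      exact hsd (ext v)
    have hgm : Monotone g := by
      intro v v' hv
      apply hm
      intro i
      simp only [hext]
      by_cases h : i < k + 1
      · rw [dif_pos h, dif_pos h]
        exact hv ⟨i, h⟩
      · rw [dif_neg h, dif_neg h]
    have hgF : (⟨some n, g⟩ : BFun) ∈ F := mem_of_fin hfin n g hgsd hgm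
    have hcomp := hcl.comp (some n) none g (fun j x => x (j : ℕ)) hgF
      (fun j => hcl.proj none (j : ℕ))
    have heq : (fun x : Pt => g (fun j => x (j : ℕ))) = w := by
      funext x
      show w (ext (fun j => x (j : ℕ))) = w x
      apply hk
      intro i hik
      have h : i < k + 1 := by omega
      show (if h' : i < k + 1 then x (⟨i, h'⟩ : Fin (k+1)).val else false) = x i
      rw [dif_pos h]
    rw [heq] at hcomp
    exact hcomp

/-- every member of `F` is in `DM1` -/
lemma F_sub_DM1 {F : Set BFun} (hcl : IsClone F) (hB : F ⊆ BorelClass)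
    (hfin : finRes F = SMspec) : F ⊆ DM1 := by
  rintro ⟨b, w⟩ hf
  exact ⟨hB hf, F_sd hcl hfin hf, F_mono hcl hfin hf⟩



open Set Function PiNat MeasureTheory

/-- the σ-lattice generated by coordinate up-sets, `∅` and `univ` -/
inductive Mlat : Set Pt → Prop
  | basic (i : ℕ) : Mlat {x | x i = true}
  | bot : Mlat ∅
  | top : Mlat Set.univ
  | iUnion (S : ℕ → Set Pt) : (∀ n, Mlat (S n)) → Mlat (⋃ n, S n)
  | iInter (S : ℕ → Set Pt) : (∀ n, Mlat (S n)) → Mlat (⋂ n, S n)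

/-- separation by a set of the σ-lattice -/
def MonSep (s t : Set Pt) : Prop := ∃ C, Mlat C ∧ s ⊆ C ∧ Disjoint t C

lemma MonSep.iUnion_nat {s t : ℕ → Set Pt} (h : ∀ m n, MonSep (s m) (t n)) :
    MonSep (⋃ n, s n) (⋃ m, t m) := by
  choose u hu hsu htu using h
  refine ⟨⋃ m, ⋂ n, u m n, ?_, ?_, ?_⟩
  · exact Mlat.iUnion _ fun m => Mlat.iInter _ fun n => hu m n
  · refine iUnion_subset fun m => subset_iUnion_of_subset m ?_
    exact subset_iInter fun n => hsu m n
  · simp_rw [disjoint_iUnion_left, disjoint_iUnion_right]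
    intro n m
    apply Disjoint.mono_right _ (htu m n)
    apply iInter_subset

/-- the monotone Lusin separation theorem, for ranges of continuous maps -/
theorem monSep_range_of_not_le {f g : (ℕ → ℕ) → Pt} (hf : Continuous f) (hg : Continuous g)
    (h : ∀ a b : ℕ → ℕ, ¬ f a ≤ g b) : MonSep (range f) (range g) := by
  by_contra hfg
  have I : ∀ n x y, ¬MonSep (f '' cylinder x n) (g '' cylinder y n) →
      ∃ x' y', x' ∈ cylinder x n ∧ y' ∈ cylinder y n ∧
      ¬MonSep (f '' cylinder x' (n + 1)) (g '' cylinder y' (n + 1)) := by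
    intro n x y
    contrapose!
    intro H
    rw [← iUnion_cylinder_update x n, ← iUnion_cylinder_update y n, image_iUnion, image_iUnion]
    refine MonSep.iUnion_nat fun i j => ?_
    exact H _ _ (update_mem_cylinder _ _ _) (update_mem_cylinder _ _ _)
  let A :=
    { p : ℕ × (ℕ → ℕ) × (ℕ → ℕ) //
      ¬MonSep (f '' cylinder p.2.1 p.1) (g '' cylinder p.2.2 p.1) }
  have : ∀ p : A, ∃ q : A,
      q.1.1 = p.1.1 + 1 ∧ q.1.2.1 ∈ cylinder p.1.2.1 p.1.1 ∧ q.1.2.2 ∈ cylinder p.1.2.2 p.1.1 := by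
    rintro ⟨⟨n, x, y⟩, hp⟩
    rcases I n x y hp with ⟨x', y', hx', hy', h'⟩
    exact ⟨⟨⟨n + 1, x', y'⟩, h'⟩, rfl, hx', hy'⟩
  choose F hFn hFx hFy using this
  let p0 : A := ⟨⟨0, fun _ => 0, fun _ => 0⟩, by simp [hfg]⟩
  let p : ℕ → A := fun n => F^[n] p0
  have prec : ∀ n, p (n + 1) = F (p n) := fun n => by
    simp only [p, iterate_succ', Function.comp]
  have pn_fst : ∀ n, (p n).1.1 = n := by
    intro n
    induction' n with n IH
    · rfl
    · simp only [prec, hFn, IH]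
  have Ix : ∀ m n, m + 1 ≤ n → (p n).1.2.1 m = (p (m + 1)).1.2.1 m := by
    intro m
    apply Nat.le_induction
    · rfl
    intro n hmn IH
    have I : (F (p n)).val.snd.fst m = (p n).val.snd.fst m := by
      apply hFx (p n) m
      rw [pn_fst]
      exact hmn
    rw [prec, I, IH]
  have Iy : ∀ m n, m + 1 ≤ n → (p n).1.2.2 m = (p (m + 1)).1.2.2 m := by
    intro m
    apply Nat.le_induction
    · rfl
    intro n hmn IH
    have I : (F (p n)).val.snd.snd m = (p n).val.snd.snd m := by
      apply hFy (p n) m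
      rw [pn_fst]
      exact hmn
    rw [prec, I, IH]
  set x : ℕ → ℕ := fun n => (p (n + 1)).1.2.1 n with hx
  set y : ℕ → ℕ := fun n => (p (n + 1)).1.2.2 n with hy
  have M : ∀ n, ¬MonSep (f '' cylinder x n) (g '' cylinder y n) := by
    intro n
    convert (p n).2 using 3
    · rw [pn_fst, ← mem_cylinder_iff_eq, mem_cylinder_iff]
      intro i hi
      rw [hx]
      exact (Ix i n hi).symm
    · rw [pn_fst, ← mem_cylinder_iff_eq, mem_cylinder_iff]
      intro i hi
      rw [hy]
      exact (Iy i n hi).symm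
  -- there is a coordinate where `f x` is `true` and `g y` is `false`
  obtain ⟨i, hfx, hgy⟩ : ∃ i, f x i = true ∧ g y i = false := not_le_iff.1 (h x y)
  set u : Set Pt := {z | z i = true} with hu
  set v : Set Pt := {z | z i = false} with hv
  have u_open : IsOpen u := by
    have : u = (fun z : Pt => z i) ⁻¹' {true} := rfl
    rw [this]
    exact (isOpen_discrete _).preimage (continuous_apply i)
  have v_open : IsOpen v := by
    have : v = (fun z : Pt => z i) ⁻¹' {false} := rfl
    rw [this]
    exact (isOpen_discrete _).preimage (continuous_apply i)
  have xu : f x ∈ u := hfx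
  have yv : g y ∈ v := hgy
  letI : MetricSpace (ℕ → ℕ) := metricSpaceNatNat
  obtain ⟨εx, εxpos, hεx⟩ : ∃ εx : ℝ, εx > 0 ∧ Metric.ball x εx ⊆ f ⁻¹' u := by
    apply Metric.mem_nhds_iff.1
    exact hf.continuousAt.preimage_mem_nhds (u_open.mem_nhds xu)
  obtain ⟨εy, εypos, hεy⟩ : ∃ εy : ℝ, εy > 0 ∧ Metric.ball y εy ⊆ g ⁻¹' v := by
    apply Metric.mem_nhds_iff.1
    exact hg.continuousAt.preimage_mem_nhds (v_open.mem_nhds yv)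
  obtain ⟨n, hn⟩ : ∃ n : ℕ, (1 / 2 : ℝ) ^ n < min εx εy :=
    exists_pow_lt_of_lt_one (lt_min εxpos εypos) (by norm_num)
  have B : MonSep (f '' cylinder x n) (g '' cylinder y n) := by
    refine ⟨u, Mlat.basic i, ?_, ?_⟩
    · rw [image_subset_iff]
      apply Subset.trans _ hεx
      intro z hz
      rw [mem_cylinder_iff_dist_le] at hz
      exact hz.trans_lt (hn.trans_le (min_le_left _ _))
    · have hgv : g '' cylinder y n ⊆ v := by
        rw [image_subset_iff]
        apply Subset.trans _ hεy
        intro z hz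
        rw [mem_cylinder_iff_dist_le] at hz
        exact hz.trans_lt (hn.trans_le (min_le_right _ _))
      have huv : Disjoint v u := by
        rw [Set.disjoint_iff]
        rintro z ⟨hz1, hz2⟩
        simp only [hv, hu, Set.mem_setOf_eq] at hz1 hz2
        rw [hz1] at hz2
        exact absurd hz2 (by simp)
      exact Disjoint.mono_left hgv huv
  exact M n B

/-- every Borel up-closed subset of `2^ω` belongs to the σ-lattice -/
theorem mlat_of_borel_upclosed {U : Set Pt} (hB : MeasurableSet U)
    (hup : ∀ x y : Pt, x ≤ y → x ∈ U → y ∈ U) : Mlat U := by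
  haveI : PolishSpace Pt := instPolishSpaceOfSeparableSpaceOfIsCompletelyMetrizableSpace
  have hA : AnalyticSet U := hB.analyticSet
  have hAc : AnalyticSet Uᶜ := hB.compl.analyticSet
  rw [AnalyticSet] at hA hAc
  rcases hA with hUe | ⟨f, hf, hfr⟩
  · rw [hUe]
    exact Mlat.bot
  rcases hAc with hUce | ⟨g, hg, hgr⟩
  · have : U = Set.univ := by
      rw [← compl_empty, ← hUce, compl_compl]
    rw [this]
    exact Mlat.top
  have hle : ∀ a b : ℕ → ℕ, ¬ f a ≤ g b := by
    intro a b hab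
    have ha : f a ∈ U := by rw [← hfr]; exact mem_range_self a
    have hb : g b ∈ Uᶜ := by rw [← hgr]; exact mem_range_self b
    exact hb (hup _ _ hab ha)
  obtain ⟨C, hC, hsub, hdisj⟩ := monSep_range_of_not_le hf hg hle
  rw [hfr] at hsub
  rw [hgr] at hdisj
  have : C = U := by
    apply Set.Subset.antisymm _ hsub
    intro z hz
    by_contra hzU
    exact (Set.disjoint_left.1 hdisj hzU) hz
  rw [← this]
  exact hC



def tail2 (x : Pt) : Pt := fun n => x (n + 2)

/-- fixed-instance indicator -/
noncomputable def ind (V : Set Pt) : Pt → Bool := fun y => decide (y ∈ V)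

lemma ind_spec {V : Set Pt} {y : Pt} : ind V y = true ↔ y ∈ V := by
  simp [ind]

lemma bool_eq_of_iff {a b : Bool} (h : a = true ↔ b = true) : a = b := by
  cases a <;> cases b <;> simp_all

lemma or_and_or (z : Pt) : (bigOr' z || bigAnd' z) = bigOr' z := by
  cases hA : bigAnd' z
  · simp
  · have h0 : z 0 = true := bigAnd_eq_true.1 hA 0
    rw [bigOr_eq_true.2 ⟨0, h0⟩]
    rfl

lemma or_and_and (z : Pt) : (bigOr' z && bigAnd' z) = bigAnd' z := by
  cases hA : bigAnd' z
  · simp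
  · have h0 : z 0 = true := bigAnd_eq_true.1 hA 0
    rw [bigOr_eq_true.2 ⟨0, h0⟩]
    rfl

lemma mem_congr {F : Set BFun} {w w' : Pt → Bool} (h : ∀ x, w x = w' x)
    (hw : (⟨none, w⟩ : BFun) ∈ F) : (⟨none, w'⟩ : BFun) ∈ F := by
  have heq : w = w' := funext h
  rwa [heq] at hw

/-- `R_v` -/
def Rv (v : Pt → Bool) : Pt → Bool :=
  fun x => (x 0 && x 1) || (x 1 && v (tail2 x)) || (x 0 && !(v (negp (tail2 x))))

lemma Rv_eval_ff {v : Pt → Bool} {x : Pt} (h0 : x 0 = false) (h1 : x 1 = false) :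
    Rv v x = false := by
  rw [Rv, h0, h1]
  simp

lemma Rv_eval_ft {v : Pt → Bool} {x : Pt} (h0 : x 0 = false) (h1 : x 1 = true) :
    Rv v x = v (tail2 x) := by
  rw [Rv, h0, h1]
  cases v (tail2 x) <;> simp

lemma Rv_eval_tf {v : Pt → Bool} {x : Pt} (h0 : x 0 = true) (h1 : x 1 = false) :
    Rv v x = !(v (negp (tail2 x))) := by
  rw [Rv, h0, h1]
  cases v (negp (tail2 x)) <;> simp

lemma Rv_eval_tt {v : Pt → Bool} {x : Pt} (h0 : x 0 = true) (h1 : x 1 = true) :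
    Rv v x = true := by
  rw [Rv, h0, h1]
  simp

lemma RS_mem {F : Set BFun} (hcl : IsClone F) (hfin : finRes F = SMspec)
    (he : (⟨none, eFn⟩ : BFun) ∈ F) {V : Set Pt} (hV : Mlat V) :
    ∀ v : Pt → Bool, (∀ x, v x = true ↔ x ∈ V) → (⟨none, Rv v⟩ : BFun) ∈ F := by
  induction hV with
  | basic i =>
    intro v hv
    have hveq : ∀ y, v y = y i := by
      intro y
      apply bool_eq_of_iff
      rw [hv y]
      exact Iff.rfl
    have hmed : (⟨some 3, fun u : Fin 3 → Bool => bmed (u 0) (u 1) (u 2)⟩ : BFun) ∈ F := by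
      apply mem_of_fin hfin 3
      · intro u
        exact bmed_neg (u 0) (u 1) (u 2)
      · intro u u' hu
        exact bmed_mono (hu 0) (hu 1) (hu 2)
    have hre := mem_reindex hcl none
      (fun j : Fin 3 => if j = 0 then 0 else if j = 1 then 1 else i + 2) hmed
    apply mem_congr _ hre
    intro x
    show bmed (x 0) (x 1) (x (i + 2)) = Rv v x
    have h1 : v (tail2 x) = x (i + 2) := hveq _
    have h2 : v (negp (tail2 x)) = !(x (i + 2)) := hveq _
    rw [Rv, h1, h2]
    cases x 0 <;> cases x 1 <;> cases x (i + 2) <;> rfl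
  | bot =>
    intro v hv
    have hveq : ∀ y, v y = false := by
      intro y
      apply bool_eq_of_iff
      rw [hv y]
      simp
    apply mem_congr _ (hcl.proj none 0)
    intro x
    show x 0 = Rv v x
    rw [Rv, hveq, hveq]
    cases x 0 <;> cases x 1 <;> rfl
  | top =>
    intro v hv
    have hveq : ∀ y, v y = true := by
      intro y
      rw [hv y]
      simp
    apply mem_congr _ (hcl.proj none 1)
    intro x
    show x 1 = Rv v x
    rw [Rv, hveq, hveq]
    cases x 0 <;> cases x 1 <;> rfl
  | iUnion S hS IH =>
    intro v hv
    set fam : ℕ → Pt → Bool := fun k => match k with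
      | 0 => fun x => x 1
      | (m+1) => Rv (ind (S m)) with hfam
    have hfamF : ∀ k, (⟨none, fam k⟩ : BFun) ∈ F := by
      intro k
      match k with
      | 0 => exact hcl.proj none 1
      | (m+1) => exact IH m (ind (S m)) (fun x => ind_spec)
    have hcomp := hcl.comp none none eFn fam he hfamF
    apply mem_congr _ hcomp
    intro x
    show eFn (fun i => fam i x) = Rv v x
    have hshape : eFn (fun i => fam i x)
        = bmed (x 1) (bigOr' (fun m => Rv (ind (S m)) x)) (bigAnd' (fun m => Rv (ind (S m)) x)) :=
      rfl
    rw [hshape]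
    cases hx0 : x 0 <;> cases hx1 : x 1
    · -- (false, false)
      have hall : ∀ m, Rv (ind (S m)) x = false := fun m => Rv_eval_ff hx0 hx1
      rw [show (fun m => Rv (ind (S m)) x) = (fun _ => false) from funext hall,
        Rv_eval_ff hx0 hx1]
      simp [bigOr', bigAnd', bmed]
    · -- (false, true) : value v(tail2 x), guard x 1 = true : Or
      have hall : ∀ m, Rv (ind (S m)) x = ind (S m) (tail2 x) := fun m => Rv_eval_ft hx0 hx1
      rw [show (fun m => Rv (ind (S m)) x) = (fun m => ind (S m) (tail2 x)) from funext hall,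
        bmed_true, or_and_or, Rv_eval_ft hx0 hx1]
      apply bool_eq_of_iff
      rw [bigOr_eq_true, hv]
      constructor
      · rintro ⟨m, hm⟩
        exact Set.mem_iUnion.2 ⟨m, ind_spec.1 hm⟩
      · intro hm
        rcases Set.mem_iUnion.1 hm with ⟨m, hm⟩
        exact ⟨m, ind_spec.2 hm⟩
    · -- (true, false) : value !(v (negp (tail2 x))), guard x 1 = false : And
      have hall : ∀ m, Rv (ind (S m)) x = !(ind (S m) (negp (tail2 x))) :=
        fun m => Rv_eval_tf hx0 hx1
      rw [show (fun m => Rv (ind (S m)) x) = (fun m => !(ind (S m) (negp (tail2 x)))) from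
        funext hall, bmed_false, or_and_and, Rv_eval_tf hx0 hx1]
      apply bool_eq_of_iff
      rw [bigAnd_eq_true]
      constructor
      · intro hall2
        have : negp (tail2 x) ∉ ⋃ n, S n := by
          intro hmem
          rcases Set.mem_iUnion.1 hmem with ⟨m, hm⟩
          have := hall2 m
          rw [ind_spec.2 hm] at this
          simp at this
        cases hvn : v (negp (tail2 x))
        · rfl
        · exact absurd ((hv _).1 hvn) this
      · intro hneg
        intro m
        cases hin : ind (S m) (negp (tail2 x))
        · rfl
        · exfalso
          have hmem : negp (tail2 x) ∈ ⋃ n, S n := Set.mem_iUnion.2 ⟨m, ind_spec.1 hin⟩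
          have := (hv (negp (tail2 x))).2 hmem
          rw [this] at hneg
          simp at hneg
    · -- (true, true)
      have hall : ∀ m, Rv (ind (S m)) x = true := fun m => Rv_eval_tt hx0 hx1
      rw [show (fun m => Rv (ind (S m)) x) = (fun _ => true) from funext hall,
        Rv_eval_tt hx0 hx1]
      simp [bigOr', bigAnd', bmed]
  | iInter S hS IH =>
    intro v hv
    set fam : ℕ → Pt → Bool := fun k => match k with
      | 0 => fun x => x 0
      | (m+1) => Rv (ind (S m)) with hfam
    have hfamF : ∀ k, (⟨none, fam k⟩ : BFun) ∈ F := by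
      intro k
      match k with
      | 0 => exact hcl.proj none 0
      | (m+1) => exact IH m (ind (S m)) (fun x => ind_spec)
    have hcomp := hcl.comp none none eFn fam he hfamF
    apply mem_congr _ hcomp
    intro x
    show eFn (fun i => fam i x) = Rv v x
    have hshape : eFn (fun i => fam i x)
        = bmed (x 0) (bigOr' (fun m => Rv (ind (S m)) x)) (bigAnd' (fun m => Rv (ind (S m)) x)) :=
      rfl
    rw [hshape]
    cases hx0 : x 0 <;> cases hx1 : x 1
    · have hall : ∀ m, Rv (ind (S m)) x = false := fun m => Rv_eval_ff hx0 hx1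
      rw [show (fun m => Rv (ind (S m)) x) = (fun _ => false) from funext hall,
        Rv_eval_ff hx0 hx1]
      simp [bigOr', bigAnd', bmed]
    · -- (false, true) : guard x 0 = false : And
      have hall : ∀ m, Rv (ind (S m)) x = ind (S m) (tail2 x) := fun m => Rv_eval_ft hx0 hx1
      rw [show (fun m => Rv (ind (S m)) x) = (fun m => ind (S m) (tail2 x)) from funext hall,
        bmed_false, or_and_and, Rv_eval_ft hx0 hx1]
      apply bool_eq_of_iff
      rw [bigAnd_eq_true, hv, Set.mem_iInter]
      constructor
      · intro hall2 m
        exact ind_spec.1 (hall2 m)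
      · intro hall2 m
        exact ind_spec.2 (hall2 m)
    · -- (true, false) : guard x 0 = true : Or
      have hall : ∀ m, Rv (ind (S m)) x = !(ind (S m) (negp (tail2 x))) :=
        fun m => Rv_eval_tf hx0 hx1
      rw [show (fun m => Rv (ind (S m)) x) = (fun m => !(ind (S m) (negp (tail2 x)))) from
        funext hall, bmed_true, or_and_or, Rv_eval_tf hx0 hx1]
      apply bool_eq_of_iff
      rw [bigOr_eq_true]
      constructor
      · rintro ⟨m, hm⟩
        cases hin : ind (S m) (negp (tail2 x))
        · have hnotin : negp (tail2 x) ∉ S m := by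
            intro hmem
            rw [ind_spec.2 hmem] at hin
            simp at hin
          have hnotint : negp (tail2 x) ∉ ⋂ n, S n := by
            intro hmem
            exact hnotin (Set.mem_iInter.1 hmem m)
          cases hvn : v (negp (tail2 x))
          · rfl
          · exact absurd ((hv _).1 hvn) hnotint
        · rw [hin] at hm
          simp at hm
      · intro hneg
        have hnotint : negp (tail2 x) ∉ ⋂ n, S n := by
          intro hmem
          rw [(hv _).2 hmem] at hneg
          simp at hneg
        have : ∃ m, negp (tail2 x) ∉ S m := by
          by_contra hc
          push_neg at hc
          exact hnotint (Set.mem_iInter.2 hc)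
        rcases this with ⟨m, hm⟩
        refine ⟨m, ?_⟩
        cases hin : ind (S m) (negp (tail2 x))
        · rfl
        · exact absurd (ind_spec.1 hin) hm
    · have hall : ∀ m, Rv (ind (S m)) x = true := fun m => Rv_eval_tt hx0 hx1
      rw [show (fun m => Rv (ind (S m)) x) = (fun _ => true) from funext hall,
        Rv_eval_tt hx0 hx1]
      simp [bigOr', bigAnd', bmed]

/-- main: `R_v ∈ F` for every monotone Borel `v` -/
lemma Rv_mem {F : Set BFun} (hcl : IsClone F) (hfin : finRes F = SMspec)
    (he : (⟨none, eFn⟩ : BFun) ∈ F) (v : Pt → Bool) (hv : Measurable v) (hm : Monotone v) :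
    (⟨none, Rv v⟩ : BFun) ∈ F := by
  have hV : Mlat {y : Pt | v y = true} := by
    apply mlat_of_borel_upclosed (mset_of_measurable hv)
    intro x y hxy hx
    have h2 := hm hxy
    simp only [Set.mem_setOf_eq] at hx ⊢
    rw [hx] at h2
    revert h2
    cases v y <;> decide
  exact RS_mem hcl hfin he hV v (fun x => Iff.rfl)



def cons (b : Bool) (t : Pt) : Pt := fun n => match n with
  | 0 => b
  | (m+1) => t m

lemma le_false_eq {b : Bool} (h : b ≤ false) : b = false := by
  cases b
  · rfl
  · exact absurd h (by decide)

lemma true_le_eq {b : Bool} (h : true ≤ b) : b = true := by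
  cases b
  · exact absurd h (by decide)
  · rfl

/-- discontinuity data -/
lemma discont_data {w : Pt → Bool} (hc : ¬ Continuous w) :
    ∃ z : Pt, ∀ I : Finset ℕ, ∃ y : Pt, (∀ i ∈ I, y i = z i) ∧ w y = !(w z) := by
  by_contra hcon
  push_neg at hcon
  apply hc
  apply continuous_iff_continuousAt.2
  intro z
  rcases hcon z with ⟨I, hI⟩
  have hopen : IsOpen {y : Pt | ∀ i ∈ I, y i = z i} := by
    have h2 : {y : Pt | ∀ i ∈ I, y i = z i} = (↑I : Set ℕ).pi (fun i => {z i}) := by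
      ext y; simp [Set.mem_pi]
    rw [h2]
    exact isOpen_set_pi I.finite_toSet (fun i _ => isOpen_discrete _)
  have hmem : {y : Pt | ∀ i ∈ I, y i = z i} ∈ nhds z := hopen.mem_nhds (fun i _ => rfl)
  rw [continuousAt_def]
  intro A hA
  have hwz : w z ∈ A := mem_of_mem_nhds hA
  apply Filter.mem_of_superset hmem
  intro y hy
  have h2 := hI y hy
  have h3 : w y = w z := by
    revert h2
    cases w y <;> cases w z <;> simp
  show w y ∈ A
  rw [h3]
  exact hwz

/-- normalized discontinuity data at a point with value `true` -/
lemma discont_data' {F : Set BFun} (hcl : IsClone F) (hfin : finRes F = SMspec)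
    {w : Pt → Bool} (hwF : (⟨none, w⟩ : BFun) ∈ F) (hc : ¬ Continuous w) :
    ∃ z : Pt, w z = true ∧
      ∀ I : Finset ℕ, ∃ y : Pt, (∀ i ∈ I, y i = z i) ∧ y ≤ z ∧ w y = false := by
  have hsd := F_sd hcl hfin hwF
  have hm := F_mono hcl hfin hwF
  rcases discont_data hc with ⟨z0, hz0⟩
  have key : ∃ z : Pt, w z = true ∧
      ∀ I : Finset ℕ, ∃ y : Pt, (∀ i ∈ I, y i = z i) ∧ w y = false := by
    cases hz : w z0
    · refine ⟨negp z0, ?_, fun I => ?_⟩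
      · show w (fun i => !(z0 i)) = true
        rw [hsd z0, hz]
        rfl
      · rcases hz0 I with ⟨y, hy1, hy2⟩
        refine ⟨negp y, fun i hi => ?_, ?_⟩
        · show (!(y i)) = (!(z0 i))
          rw [hy1 i hi]
        · show w (fun i => !(y i)) = false
          rw [hsd y, hy2, hz]
          rfl
    · refine ⟨z0, hz, fun I => ?_⟩
      rcases hz0 I with ⟨y, hy1, hy2⟩
      rw [hz] at hy2
      exact ⟨y, hy1, hy2⟩
  rcases key with ⟨z, hz, hdata⟩
  refine ⟨z, hz, fun I => ?_⟩
  rcases hdata I with ⟨y, hy1, hy2⟩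
  refine ⟨fun i => y i && z i, fun i hi => ?_, ?_, ?_⟩
  · show (y i && z i) = z i
    rw [hy1 i hi]
    cases z i <;> rfl
  · intro i
    show (y i && z i) ≤ z i
    cases hyi : y i <;> cases hzi : z i <;> simp
  · have hle : (fun i => y i && z i) ≤ y := by
      intro i
      show (y i && z i) ≤ y i
      cases hyi : y i <;> cases hzi : z i <;> simp
    have h3 := hm hle
    rw [hy2] at h3
    exact le_false_eq h3

/-- the support of the discontinuity point is infinite -/
lemma discont_support_infinite {w : Pt → Bool} {z : Pt} (hz : w z = true)
    (hdata : ∀ I : Finset ℕ, ∃ y : Pt, (∀ i ∈ I, y i = z i) ∧ y ≤ z ∧ w y = false) :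
    {i : ℕ | z i = true}.Infinite := by
  intro hfin
  set N : ℕ := hfin.toFinset.sup id + 1 with hN
  rcases hdata (Finset.range N) with ⟨y, hy1, hy2, hy3⟩
  have hyz : y = z := by
    funext i
    by_cases hiN : i < N
    · exact hy1 i (Finset.mem_range.2 hiN)
    · have hzi : z i = false := by
        cases hzi : z i
        · rfl
        · exfalso
          have h4 : i ∈ hfin.toFinset := hfin.mem_toFinset.2 hzi
          have h5 := Finset.le_sup (f := id) h4
          simp only [id] at h5
          omega
      rw [hzi]
      have h6 := hy2 i
      rw [hzi] at h6
      exact le_false_eq h6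
  rw [hyz, hz] at hy3
  exact absurd hy3 (by simp)

/-! ### the H function -/

noncomputable def Hfun (w : Pt → Bool) (z : Pt) : Pt → Bool :=
  fun u => w (fun i => u (if z i = true then Nat.count (fun j => z j = true) i + 1 else 0))

/-- the `m`-th step vector: guard `false`, then `m` ones followed by zeros -/
def stepv (m : ℕ) : Pt := fun k => match k with
  | 0 => false
  | (j+1) => decide (j < m)

lemma Hfun_mem {F : Set BFun} (hcl : IsClone F) {w : Pt → Bool} (z : Pt)
    (hw : (⟨none, w⟩ : BFun) ∈ F) : (⟨none, Hfun w z⟩ : BFun) ∈ F := by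
  apply mem_congr _ (mem_reindex hcl none
    (fun i => if z i = true then Nat.count (fun j => z j = true) i + 1 else 0) hw)
  intro u
  rfl

lemma Hfun_top {w : Pt → Bool} {z : Pt} (hm : Monotone w) (hz : w z = true) :
    ∀ u : Pt, (∀ j, u (j + 1) = true) → Hfun w z u = true := by
  intro u hu
  have hle : z ≤ fun i =>
      u (if z i = true then Nat.count (fun j => z j = true) i + 1 else 0) := by
    intro i
    show z i ≤ u (if z i = true then Nat.count (fun j => z j = true) i + 1 else 0)
    by_cases hzi : z i = true
    · rw [if_pos hzi, hu, hzi]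
    · have hzi' : z i = false := by
        cases h : z i
        · rfl
        · exact absurd h hzi
      rw [hzi']
      exact Bool.false_le _
  have h2 := hm hle
  rw [hz] at h2
  exact true_le_eq h2

lemma Hfun_low {w : Pt → Bool} {z : Pt} (hm : Monotone w) (hz : w z = true)
    (hinf : {i : ℕ | z i = true}.Infinite)
    (hdata : ∀ I : Finset ℕ, ∃ y : Pt, (∀ i ∈ I, y i = z i) ∧ y ≤ z ∧ w y = false) :
    ∀ m : ℕ, Hfun w z (stepv m) = false := by
  intro m
  have hinf' : (setOf (fun j => z j = true)).Infinite := hinf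
  rcases hdata (Finset.range (Nat.nth (fun j => z j = true) m)) with ⟨y, hy1, hy2, hy3⟩
  set u : Pt := stepv m with hu
  have hle : (fun i =>
      u (if z i = true then Nat.count (fun j => z j = true) i + 1 else 0)) ≤ y := by
    intro i
    show u (if z i = true then Nat.count (fun j => z j = true) i + 1 else 0) ≤ y i
    by_cases hzi : z i = true
    · rw [if_pos hzi]
      by_cases hcnt : Nat.count (fun j => z j = true) i < m
      · have hiN : i < Nat.nth (fun j => z j = true) m := by
          by_contra hiN
          push_neg at hiN
          have h8 : Nat.count (fun j => z j = true) (Nat.nth (fun j => z j = true) m)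
              ≤ Nat.count (fun j => z j = true) i := Nat.count_monotone _ hiN
          rw [Nat.count_nth_of_infinite hinf' m] at h8
          omega
        have h9 : y i = true := by
          rw [hy1 i (Finset.mem_range.2 hiN)]
          exact hzi
        rw [h9]
        exact Bool.le_true _
      · have h10 : u (Nat.count (fun j => z j = true) i + 1) = false := by
          show decide (Nat.count (fun j => z j = true) i < m) = false
          simp only [decide_eq_false_iff_not]
          omega
        rw [h10]
        exact Bool.false_le _
    · rw [if_neg hzi]
      show u 0 ≤ y i
      rw [show u 0 = false from rfl]
      exact Bool.false_le _
  have h9 := hm hle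
  rw [hy3] at h9
  exact le_false_eq h9

/-! ### window functions -/

noncomputable def winOr (j : ℕ) (t : Pt) : Bool := decide (∃ i, i ≤ j ∧ t i = true)
noncomputable def winAnd (j : ℕ) (t : Pt) : Bool := decide (∀ i, i ≤ j → t i = true)

noncomputable def wjF (j : ℕ) : Pt → Bool :=
  fun x => bmed (x 0) (winOr j (tailf x)) (winAnd j (tailf x))

lemma winOr_spec {j : ℕ} {t : Pt} : winOr j t = true ↔ ∃ i, i ≤ j ∧ t i = true := by
  simp [winOr]

lemma winAnd_spec {j : ℕ} {t : Pt} : winAnd j t = true ↔ ∀ i, i ≤ j → t i = true := by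
  simp [winAnd]

lemma winOr_negp {j : ℕ} (t : Pt) : winOr j (negp t) = !(winAnd j t) := by
  cases h : winAnd j t
  · simp only [Bool.not_false]
    rw [winOr_spec]
    have h2 : ¬ (∀ i, i ≤ j → t i = true) := by
      intro hall
      rw [winAnd_spec.2 hall] at h
      exact absurd h (by decide)
    push_neg at h2
    rcases h2 with ⟨i, hij, hti⟩
    refine ⟨i, hij, ?_⟩
    show (!(t i)) = true
    cases hti2 : t i
    · rfl
    · exact absurd hti2 hti
  · simp only [Bool.not_true]
    have hall := winAnd_spec.1 h
    cases hOr : winOr j (negp t)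
    · rfl
    · rcases winOr_spec.1 hOr with ⟨i, hij, hneg⟩
      have h3 : (!(t i)) = true := hneg
      rw [hall i hij] at h3
      exact absurd h3 (by decide)

lemma winAnd_negp {j : ℕ} (t : Pt) : winAnd j (negp t) = !(winOr j t) := by
  have h := winOr_negp (j := j) (negp t)
  rw [negp_negp] at h
  cases h2 : winOr j t <;> rw [h2] at h <;> revert h <;> cases winAnd j (negp t) <;> decide

lemma winOr_mono (j : ℕ) {t t' : Pt} (h : t ≤ t') : winOr j t ≤ winOr j t' := by
  rw [bool_le_iff]
  intro h1
  rcases winOr_spec.1 h1 with ⟨i, hij, hti⟩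
  exact winOr_spec.2 ⟨i, hij, le_iff_forall_imp.1 h i hti⟩

lemma winAnd_mono (j : ℕ) {t t' : Pt} (h : t ≤ t') : winAnd j t ≤ winAnd j t' := by
  rw [bool_le_iff]
  intro h1
  exact winAnd_spec.2 fun i hij => le_iff_forall_imp.1 h i (winAnd_spec.1 h1 i hij)

lemma winOr_congr {j : ℕ} {t t' : Pt} (h : ∀ i ≤ j, t i = t' i) : winOr j t = winOr j t' := by
  apply bool_eq_of_iff
  rw [winOr_spec, winOr_spec]
  constructor
  · rintro ⟨i, hij, hti⟩; exact ⟨i, hij, by rw [← h i hij]; exact hti⟩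
  · rintro ⟨i, hij, hti⟩; exact ⟨i, hij, by rw [h i hij]; exact hti⟩

lemma winAnd_congr {j : ℕ} {t t' : Pt} (h : ∀ i ≤ j, t i = t' i) : winAnd j t = winAnd j t' := by
  apply bool_eq_of_iff
  rw [winAnd_spec, winAnd_spec]
  constructor
  · intro hall i hij; rw [← h i hij]; exact hall i hij
  · intro hall i hij; rw [h i hij]; exact hall i hij

lemma wjF_sd (j : ℕ) : ∀ x, wjF j (fun i => !(x i)) = !(wjF j x) := by
  intro x
  show bmed (!(x 0)) (winOr j (tailf (negp x))) (winAnd j (tailf (negp x))) = !(wjF j x)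
  rw [tailf_negp, winOr_negp, winAnd_negp, bmed_comm23, bmed_neg]
  rfl

lemma wjF_mono (j : ℕ) : Monotone (wjF j) := by
  intro x y h
  exact bmed_mono (h 0) (winOr_mono j (tailf_mono h)) (winAnd_mono j (tailf_mono h))

lemma wjF_support (j : ℕ) {x y : Pt} (h : ∀ i < j + 2, x i = y i) : wjF j x = wjF j y := by
  show bmed (x 0) (winOr j (tailf x)) (winAnd j (tailf x))
      = bmed (y 0) (winOr j (tailf y)) (winAnd j (tailf y))
  rw [h 0 (by omega),
    winOr_congr (t := tailf x) (t' := tailf y) (fun i hij => h (i+1) (by omega)),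
    winAnd_congr (t := tailf x) (t' := tailf y) (fun i hij => h (i+1) (by omega))]

lemma cont_of_finite_support (w : Pt → Bool) (k : ℕ)
    (h : ∀ x y : Pt, (∀ i < k, x i = y i) → w x = w y) : Continuous w := by
  have heq : w = (fun v : Fin k → Bool => w (fun i => if hik : i < k then v ⟨i, hik⟩ else false))
      ∘ (fun (x : Pt) (i : Fin k) => x i.val) := by
    funext x
    apply h
    intro i hik
    show x i = (if hik' : i < k then x (⟨i, hik⟩ : Fin k).val else false)
    rw [dif_pos hik]
  rw [heq]
  exact continuous_of_discreteTopology.comp (continuous_pi fun i => continuous_apply i.val)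

lemma wjF_mem {F : Set BFun} (hcl : IsClone F) (hfin : finRes F = SMspec) (j : ℕ) :
    (⟨none, wjF j⟩ : BFun) ∈ F :=
  DM3_sub_F hcl hfin ⟨cont_of_finite_support (wjF j) (j + 2) (fun x y h => wjF_support j h),
    wjF_sd j, wjF_mono j⟩

/-- from any discontinuous member, `e` belongs to the clone -/
lemma e_mem_of_discont {F : Set BFun} (hcl : IsClone F) (hfin : finRes F = SMspec)
    {w : Pt → Bool} (hwF : (⟨none, w⟩ : BFun) ∈ F) (hc : ¬ Continuous w) :
    (⟨none, eFn⟩ : BFun) ∈ F := by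
  have hm := F_mono hcl hfin hwF
  rcases discont_data' hcl hfin hwF hc with ⟨z, hz, hdata⟩
  have hinf := discont_support_infinite hz hdata
  have hHmem : (⟨none, Hfun w z⟩ : BFun) ∈ F := Hfun_mem hcl z hwF
  have hHsd := F_sd hcl hfin hHmem
  have hHm := F_mono hcl hfin hHmem
  have htop : ∀ u : Pt, (∀ j, u (j + 1) = true) → Hfun w z u = true := Hfun_top hm hz
  have hbot : ∀ u : Pt, (∀ j, u (j + 1) = false) → Hfun w z u = false := by
    intro u hu
    have h1 := hHsd u
    have h2 : Hfun w z (fun i => !(u i)) = true := by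
      apply htop
      intro j
      rw [hu j]
      rfl
    rw [h2] at h1
    cases hHu : Hfun w z u
    · rfl
    · rw [hHu] at h1
      exact absurd h1.symm (by decide)
  have hlow := Hfun_low hm hz hinf hdata
  have hup : ∀ (u : Pt) (m : ℕ), u 0 = true → (∀ j, m ≤ j → u (j + 1) = true) →
      Hfun w z u = true := by
    intro u m hu0 hu
    have h1 := hHsd (stepv m)
    rw [hlow m] at h1
    have hle : (fun i => !(stepv m i)) ≤ u := by
      intro i
      match i with
      | 0 =>
        show (!(false : Bool)) ≤ u 0
        rw [hu0]
        decide
      | (j+1) =>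
        show (!(decide (j < m))) ≤ u (j + 1)
        by_cases hjm : m ≤ j
        · rw [hu j hjm]
          exact Bool.le_true _
        · have h5 : decide (j < m) = true := by
            simp only [decide_eq_true_eq]
            omega
          rw [h5]
          exact Bool.false_le _
    have h3 := hHm hle
    rw [h1] at h3
    exact true_le_eq (by exact h3)
  have hdown : ∀ (u : Pt) (m : ℕ), u 0 = false → (∀ j, m ≤ j → u (j + 1) = false) →
      Hfun w z u = false := by
    intro u m hu0 hu
    have hle : u ≤ stepv m := by
      intro i
      match i with
      | 0 =>
        show u 0 ≤ (false : Bool)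
        rw [hu0]
      | (j+1) =>
        show u (j + 1) ≤ decide (j < m)
        by_cases hjm : m ≤ j
        · rw [hu j hjm]
          exact Bool.false_le _
        · have h5 : decide (j < m) = true := by
            simp only [decide_eq_true_eq]
            omega
          rw [h5]
          exact Bool.le_true _
    have h3 := hHm hle
    rw [hlow m] at h3
    exact le_false_eq h3
  -- now build e
  set fam : ℕ → Pt → Bool := fun k => match k with
    | 0 => fun x => x 0
    | (j+1) => wjF j with hfam
  have hfamF : ∀ k, (⟨none, fam k⟩ : BFun) ∈ F := by
    intro k
    match k with
    | 0 => exact hcl.proj none 0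
    | (j+1) => exact wjF_mem hcl hfin j
  have hcomp := hcl.comp none none (Hfun w z) fam hHmem hfamF
  apply mem_congr _ hcomp
  intro x
  show Hfun w z (fun k => fam k x) = eFn x
  have hu0 : (fun k => fam k x) 0 = x 0 := rfl
  have huj : ∀ j, (fun k => fam k x) (j + 1) = wjF j x := fun j => rfl
  have heFn : eFn x = bmed (x 0) (bigOr' (tailf x)) (bigAnd' (tailf x)) := rfl
  cases hx0 : x 0
  · by_cases hex : ∃ i, tailf x i = false
    · rcases hex with ⟨i, hti⟩
      have hH0 : Hfun w z (fun k => fam k x) = false := by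
        apply hdown _ i
        · exact hx0
        · intro j hij
          show bmed (x 0) (winOr j (tailf x)) (winAnd j (tailf x)) = false
          have hand : winAnd j (tailf x) = false := by
            cases hand : winAnd j (tailf x)
            · rfl
            · have h7 := winAnd_spec.1 hand i hij
              rw [hti] at h7
              exact absurd h7 (by decide)
          rw [hx0, hand, bmed_false]
          simp
      rw [hH0, heFn, hx0]
      have hand : bigAnd' (tailf x) = false := by
        simp only [bigAnd', decide_eq_false_iff_not]
        intro hall
        rw [hall i] at hti
        exact absurd hti (by decide)
      rw [hand, bmed_false]
      simp
    · push_neg at hex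
      have hall : ∀ i, tailf x i = true := by
        intro i
        cases h : tailf x i
        · exact absurd h (hex i)
        · rfl
      have hH1 : Hfun w z (fun k => fam k x) = true := by
        apply htop
        intro j
        show bmed (x 0) (winOr j (tailf x)) (winAnd j (tailf x)) = true
        have hand : winAnd j (tailf x) = true := winAnd_spec.2 fun i _ => hall i
        have hor : winOr j (tailf x) = true := winOr_spec.2 ⟨0, by omega, hall 0⟩
        rw [hx0, hand, hor, bmed_false]
        rfl
      rw [hH1, heFn, hx0]
      have h1 : bigAnd' (tailf x) = true := bigAnd_eq_true.2 hall
      have h2 : bigOr' (tailf x) = true := bigOr_eq_true.2 ⟨0, hall 0⟩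
      rw [h1, h2, bmed_false]
      rfl
  · by_cases hex : ∃ i, tailf x i = true
    · rcases hex with ⟨i, hti⟩
      have hH1 : Hfun w z (fun k => fam k x) = true := by
        apply hup _ i
        · exact hx0
        · intro j hij
          show bmed (x 0) (winOr j (tailf x)) (winAnd j (tailf x)) = true
          have hor : winOr j (tailf x) = true := winOr_spec.2 ⟨i, hij, hti⟩
          rw [hx0, hor, bmed_true]
          simp
      rw [hH1, heFn, hx0]
      have hor : bigOr' (tailf x) = true := bigOr_eq_true.2 ⟨i, hti⟩
      rw [hor, bmed_true]
      simp
    · push_neg at hex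
      have hall : ∀ i, tailf x i = false := by
        intro i
        cases h : tailf x i
        · rfl
        · exact absurd h (hex i)
      have hH0 : Hfun w z (fun k => fam k x) = false := by
        apply hbot
        intro j
        show bmed (x 0) (winOr j (tailf x)) (winAnd j (tailf x)) = false
        have hor : winOr j (tailf x) = false := by
          cases h : winOr j (tailf x)
          · rfl
          · rcases winOr_spec.1 h with ⟨i, _, hti⟩
            rw [hall i] at hti
            exact absurd hti (by decide)
        have hand : winAnd j (tailf x) = false := by
          cases h : winAnd j (tailf x)
          · rfl
          · have h8 := winAnd_spec.1 h 0 (by omega)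
            rw [hall 0] at h8
            exact absurd h8 (by decide)
        rw [hx0, hor, hand, bmed_true]
        rfl
      rw [hH0, heFn, hx0]
      have hor : bigOr' (tailf x) = false := by
        simp only [bigOr', decide_eq_false_iff_not]
        rintro ⟨i, hti⟩
        rw [hall i] at hti
        exact absurd hti (by decide)
      have hand : bigAnd' (tailf x) = false := by
        simp only [bigAnd', decide_eq_false_iff_not]
        intro h
        have h9 := h 0
        rw [hall 0] at h9
        exact absurd h9 (by decide)
      rw [hor, hand, bmed_true]
      rfl



/-! ### cumulative chains -/

noncomputable def chain (W : Pt → Bool) : ℕ → Pt → Bool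
  | 0 => fun x => x 0
  | (j+1) => fun x => Rv W (fun k => match k with
      | 0 => chain W j x
      | 1 => x (j+1)
      | (k+2) => x k)

lemma chain_step (W : Pt → Bool) (j : ℕ) (x : Pt) :
    chain W (j+1) x = ((chain W j x && x (j+1)) || (x (j+1) && W x)
      || (chain W j x && !(W (negp x)))) := rfl

lemma chain_mem {F : Set BFun} (hcl : IsClone F) {W : Pt → Bool}
    (hRvW : (⟨none, Rv W⟩ : BFun) ∈ F) (j : ℕ) : (⟨none, chain W j⟩ : BFun) ∈ F := by
  induction j with
  | zero => exact hcl.proj none 0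
  | succ j IH =>
    set fam : ℕ → Pt → Bool := fun k => match k with
      | 0 => chain W j
      | 1 => fun x => x (j+1)
      | (k+2) => fun x => x k with hfam
    have hfamF : ∀ k, (⟨none, fam k⟩ : BFun) ∈ F := by
      intro k
      match k with
      | 0 => exact IH
      | 1 => exact hcl.proj none (j+1)
      | (k+2) => exact hcl.proj none k
    have hcomp := hcl.comp none none (Rv W) fam hRvW hfamF
    apply mem_congr _ hcomp
    intro x
    show Rv W (fun k => fam k x) = chain W (j+1) x
    have h1 : (fun k => fam k x) = (fun k => match k with
      | 0 => chain W j x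
      | 1 => x (j+1)
      | (k+2) => x k) := by
      funext k
      match k with
      | 0 => rfl
      | 1 => rfl
      | (k+2) => rfl
    rw [h1]
    rfl

lemma chain_true {W : Pt → Bool} {x : Pt} (hWx : W x = true) (hWn : W (negp x) = false) :
    ∀ j, (∃ l, l ≤ j ∧ x l = true) → chain W j x = true := by
  intro j
  induction j with
  | zero =>
    rintro ⟨l, hl, hxl⟩
    have : l = 0 := Nat.le_zero.1 hl
    rw [this] at hxl
    show x 0 = true
    exact hxl
  | succ j IH =>
    rintro ⟨l, hl, hxl⟩
    rw [chain_step, hWx, hWn]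
    by_cases hlj : l ≤ j
    · rw [IH ⟨l, hlj, hxl⟩]
      cases x (j+1) <;> rfl
    · have : l = j + 1 := by omega
      rw [this] at hxl
      rw [hxl]
      cases chain W j x <;> rfl

/-! ### the two selector factories -/

lemma factory_iii {F : Set BFun} (hcl : IsClone F) (hfin : finRes F = SMspec)
    (he : (⟨none, eFn⟩ : BFun) ∈ F) (W : Pt → Bool) (hWB : Measurable W) (hWm : Monotone W)
    (hpf : ∀ x, W x = true → W (negp x) = false)
    (w' : Pt → Bool) (hw'F : (⟨none, w'⟩ : BFun) ∈ F)
    (hw'nv : ∀ m : ℕ, w' (fun j => decide (m ≤ j)) = true) :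
    ∃ p : Pt → Bool, (⟨none, p⟩ : BFun) ∈ F ∧ ∀ x, W x = true → p x = true := by
  have hRvW := Rv_mem hcl hfin he W hWB hWm
  have hw'm := F_mono hcl hfin hw'F
  refine ⟨fun x => w' (fun j => chain W j x), ?_, ?_⟩
  · exact hcl.comp none none w' (fun j => chain W j) hw'F (fun j => chain_mem hcl hRvW j)
  · intro x hWx
    have hWn := hpf x hWx
    have hex : ∃ i, x i = true := by
      by_contra hc
      push_neg at hc
      have hxall : ∀ i, x i = false := by
        intro i
        cases h : x i
        · rfl
        · exact absurd h (hc i)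
      have hle : x ≤ negp x := by
        intro i
        rw [hxall i]
        exact Bool.false_le _
      have := hWm hle
      rw [hWx, hWn] at this
      exact absurd this (by decide)
    rcases hex with ⟨i0, hi0⟩
    have hch : ∀ j, i0 ≤ j → chain W j x = true :=
      fun j hj => chain_true hWx hWn j ⟨i0, hj, hi0⟩
    have hle : (fun j => decide (i0 ≤ j)) ≤ (fun j => chain W j x) := by
      rw [le_iff_forall_imp]
      intro j hj
      rw [decide_eq_true_eq] at hj
      exact hch j hj
    have h2 := hw'm hle
    rw [hw'nv i0] at h2
    exact true_le_eq h2

lemma factory_ii {F : Set BFun} (hcl : IsClone F) (hfin : finRes F = SMspec)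
    (he : (⟨none, eFn⟩ : BFun) ∈ F) (W : Pt → Bool) (hWB : Measurable W) (hWm : Monotone W)
    (hpf : ∀ x, W x = true → W (negp x) = false) (k0 : ℕ)
    (hWin : ∀ x, W x = true → ∃ i, i < k0 ∧ x i = true) :
    ∃ p : Pt → Bool, (⟨none, p⟩ : BFun) ∈ F ∧ ∀ x, W x = true → p x = true := by
  have hRvW := Rv_mem hcl hfin he W hWB hWm
  set fam : ℕ → Pt → Bool := fun k => match k with
    | 0 => fun x => x 0
    | (j+1) => chain W (k0 + j) with hfam
  have hfamF : ∀ k, (⟨none, fam k⟩ : BFun) ∈ F := by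
    intro k
    match k with
    | 0 => exact hcl.proj none 0
    | (j+1) => exact chain_mem hcl hRvW (k0 + j)
  refine ⟨fun x => eFn (fun k => fam k x), hcl.comp none none eFn fam he hfamF, ?_⟩
  intro x hWx
  have hWn := hpf x hWx
  rcases hWin x hWx with ⟨i, hik, hxi⟩
  have hch : ∀ j, chain W (k0 + j) x = true :=
    fun j => chain_true hWx hWn (k0 + j) ⟨i, by omega, hxi⟩
  show bmed ((fun k => fam k x) 0) (bigOr' (tailf (fun k => fam k x)))
      (bigAnd' (tailf (fun k => fam k x))) = true
  have hAnd : bigAnd' (tailf (fun k => fam k x)) = true := by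
    apply bigAnd_eq_true.2
    intro j
    show chain W (k0 + j) x = true
    exact hch j
  have hOr : bigOr' (tailf (fun k => fam k x)) = true := by
    apply bigOr_eq_true.2
    exact ⟨0, hch 0⟩
  rw [hAnd, hOr]
  cases (fun k => fam k x) 0 <;> rfl

/-! ### reconstruction of a target from a selector -/

lemma cons_eta (x : Pt) : cons (x 0) (tailf x) = x := by
  funext n
  match n with
  | 0 => rfl
  | (m+1) => rfl

lemma cons_neg (t : Pt) : cons true (negp t) = negp (cons false t) := by
  funext n
  match n with
  | 0 => rfl
  | (m+1) => rfl

lemma cons_neg' (t : Pt) : cons false (negp t) = negp (cons true t) := by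
  funext n
  match n with
  | 0 => rfl
  | (m+1) => rfl

lemma measurable_cons (b : Bool) : Measurable (cons b) := by
  apply measurable_pi_lambda
  intro n
  match n with
  | 0 => exact measurable_const
  | (m+1) => exact measurable_pi_apply m

lemma cons_mono (b : Bool) {t t' : Pt} (h : t ≤ t') : cons b t ≤ cons b t' := by
  intro n
  match n with
  | 0 => exact le_refl b
  | (m+1) => exact h m

lemma cons_le (t : Pt) : cons false t ≤ cons true t := by
  intro n
  match n with
  | 0 => exact Bool.false_le _
  | (m+1) => exact le_refl (t m)

lemma target_mem {F : Set BFun} (hcl : IsClone F) (hfin : finRes F = SMspec)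
    (he : (⟨none, eFn⟩ : BFun) ∈ F) (w : Pt → Bool) (hwB : Measurable w)
    (hwsd : ∀ x, w (fun i => !(x i)) = !(w x)) (hwm : Monotone w)
    (p : Pt → Bool) (hpF : (⟨none, p⟩ : BFun) ∈ F)
    (hp1 : ∀ t, w (cons false t) = true → p t = true) :
    (⟨none, w⟩ : BFun) ∈ F := by
  set g1 : Pt → Bool := fun t => w (cons true t) with hg1
  set g0 : Pt → Bool := fun t => w (cons false t) with hg0
  have hg1m : Monotone g1 := fun t t' h => hwm (cons_mono true h)
  have hg1B : Measurable g1 := hwB.comp (measurable_cons true)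
  have hdual1 : ∀ t, g1 (negp t) = !(g0 t) := by
    intro t
    show w (cons true (negp t)) = !(w (cons false t))
    rw [cons_neg t]
    exact hwsd (cons false t)
  have hdual0 : ∀ t, g0 (negp t) = !(g1 t) := by
    intro t
    show w (cons false (negp t)) = !(w (cons true t))
    rw [cons_neg' t]
    exact hwsd (cons true t)
  have hpsd := F_sd hcl hfin hpF
  have hp2 : ∀ t, g1 t = false → p t = false := by
    intro t h
    have h2 : g0 (negp t) = true := by
      rw [hdual0, h]
      rfl
    have h3 := hp1 _ h2
    have h4 := hpsd t
    rw [show (fun i => !(t i)) = negp t from rfl] at h4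
    rw [h3] at h4
    cases hpt : p t
    · rfl
    · rw [hpt] at h4
      exact absurd h4.symm (by decide)
  have hp0 : ∀ t, g0 t ≤ p t := by
    intro t
    cases h : g0 t
    · exact Bool.false_le _
    · rw [hp1 t h]
  have hple : ∀ t, p t ≤ g1 t := by
    intro t
    cases h : g1 t
    · rw [hp2 t h]
    · exact Bool.le_true _
  have hptail : (⟨none, fun x => p (tailf x)⟩ : BFun) ∈ F :=
    mem_reindex hcl none (fun n => n + 1) hpF
  have hRv := Rv_mem hcl hfin he g1 hg1B hg1m
  set fam : ℕ → Pt → Bool := fun k => match k with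
    | 0 => fun x => p (tailf x)
    | 1 => fun x => x 0
    | (k+2) => fun x => x (k+1) with hfam
  have hfamF : ∀ k, (⟨none, fam k⟩ : BFun) ∈ F := by
    intro k
    match k with
    | 0 => exact hptail
    | 1 => exact hcl.proj none 0
    | (k+2) => exact hcl.proj none (k+1)
  have hcomp := hcl.comp none none (Rv g1) fam hRv hfamF
  apply mem_congr _ hcomp
  intro x
  show Rv g1 (fun k => fam k x) = w x
  have hval : Rv g1 (fun k => fam k x)
      = ((p (tailf x) && x 0) || (x 0 && g1 (tailf x))
        || (p (tailf x) && !(g1 (negp (tailf x))))) := rfl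
  rw [hval]
  have hwx : w x = w (cons (x 0) (tailf x)) := by rw [cons_eta]
  cases hx0 : x 0
  · have hw0 : w x = g0 (tailf x) := by
      rw [hwx, hx0]
    rw [hw0, hdual1 (tailf x), Bool.not_not]
    cases hg : g0 (tailf x)
    · simp
    · rw [hp1 _ hg]
      simp
  · have hw1 : w x = g1 (tailf x) := by
      rw [hwx, hx0]
    rw [hw1, hdual1 (tailf x), Bool.not_not]
    cases hg : g1 (tailf x)
    · rw [hp2 _ hg]
      have hg0f : g0 (tailf x) = false := by
        have := hwm (cons_le (tailf x))
        rw [show w (cons true (tailf x)) = g1 (tailf x) from rfl, hg] at this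
        exact le_false_eq this
      rw [hg0f]
      simp
    · have := hp0 (tailf x)
      cases hg0v : g0 (tailf x) <;> cases hpv : p (tailf x) <;> simp



lemma vanish_translate {w' : Pt → Bool} (hm : Monotone w')
    (hnv : ¬ VanishNearBot (⟨none, w'⟩ : BFun)) :
    ∀ m : ℕ, w' (fun j => decide (m ≤ j)) = true := by
  intro m
  have hnv' : ¬ ((fun _ => false) ∉ closure {x : Pt | w' x = true}) := hnv
  rw [notMem_closure_iff] at hnv'
  push_neg at hnv'
  rcases hnv' (Finset.range m) with ⟨y, hy1, hy2⟩
  simp only [Set.mem_setOf_eq] at hy2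
  have hle : y ≤ fun j => decide (m ≤ j) := by
    intro j
    show y j ≤ decide (m ≤ j)
    by_cases hj : j < m
    · have : y j = false := hy1 j (Finset.mem_range.2 hj)
      rw [this]
      exact Bool.false_le _
    · have : decide (m ≤ j) = true := by
        simp only [decide_eq_true_eq]
        omega
      rw [this]
      exact Bool.le_true _
  have h2 := hm hle
  rw [hy2] at h2
  exact true_le_eq h2

/-- the big pipeline, case `DM1` -/
lemma DM1_target {F : Set BFun} (hcl : IsClone F) (hfin : finRes F = SMspec)
    (he : (⟨none, eFn⟩ : BFun) ∈ F)
    (w' : Pt → Bool) (hw'F : (⟨none, w'⟩ : BFun) ∈ F)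
    (hw'nv : ∀ m : ℕ, w' (fun j => decide (m ≤ j)) = true)
    (w : Pt → Bool) (hwB : Measurable w)
    (hwsd : ∀ x, w (fun i => !(x i)) = !(w x)) (hwm : Monotone w) :
    (⟨none, w⟩ : BFun) ∈ F := by
  have hWB : Measurable (fun t => w (cons false t)) := hwB.comp (measurable_cons false)
  have hWm : Monotone (fun t => w (cons false t)) := fun t t' h => hwm (cons_mono false h)
  have hpf : ∀ t, (fun t => w (cons false t)) t = true →
      (fun t => w (cons false t)) (negp t) = false := by
    intro t h
    have hwsd' : ∀ x, w (negp x) = !(w x) := hwsd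
    have h2 : w (cons true t) = true := by
      have h3 := hwm (cons_le t)
      simp only at h
      rw [h] at h3
      exact true_le_eq h3
    show w (cons false (negp t)) = false
    rw [cons_neg' t, hwsd' (cons true t), h2]
    rfl
  obtain ⟨p, hpF, hp1⟩ := factory_iii hcl hfin he _ hWB hWm hpf w' hw'F hw'nv
  exact target_mem hcl hfin he w hwB hwsd hwm p hpF hp1

/-- the big pipeline, case `DM2` -/
lemma DM2_target {F : Set BFun} (hcl : IsClone F) (hfin : finRes F = SMspec)
    (he : (⟨none, eFn⟩ : BFun) ∈ F)
    (w : Pt → Bool) (hwB : Measurable w)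
    (hwsd : ∀ x, w (fun i => !(x i)) = !(w x)) (hwm : Monotone w)
    (hv : VanishNearBot (⟨none, w⟩ : BFun)) :
    (⟨none, w⟩ : BFun) ∈ F := by
  have hWB : Measurable (fun t => w (cons false t)) := hwB.comp (measurable_cons false)
  have hWm : Monotone (fun t => w (cons false t)) := fun t t' h => hwm (cons_mono false h)
  have hpf : ∀ t, (fun t => w (cons false t)) t = true →
      (fun t => w (cons false t)) (negp t) = false := by
    intro t h
    have hwsd' : ∀ x, w (negp x) = !(w x) := hwsd
    have h2 : w (cons true t) = true := by
      have h3 := hwm (cons_le t)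
      simp only at h
      rw [h] at h3
      exact true_le_eq h3
    show w (cons false (negp t)) = false
    rw [cons_neg' t, hwsd' (cons true t), h2]
    rfl
  have hv' : (fun _ => false) ∉ closure {x : Pt | w x = true} := hv
  rw [notMem_closure_iff] at hv'
  rcases hv' with ⟨I, hI⟩
  set k : ℕ := I.sup id + 1 with hk
  have hvan : ∀ x : Pt, (∀ i, i < k → x i = false) → w x = false := by
    intro x hx
    have h2 := hI x (fun i hi => hx i (by
      have := Finset.le_sup (f := id) hi
      simp only [id] at this
      omega))
    simp only [Set.mem_setOf_eq] at h2
    exact false_of_ne_true h2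
  have hWin : ∀ t, (fun t => w (cons false t)) t = true → ∃ i, i < k ∧ t i = true := by
    intro t ht
    simp only at ht
    by_contra hc
    push_neg at hc
    have hzero : ∀ i, i < k → cons false t i = false := by
      intro i hik
      match i with
      | 0 => rfl
      | (m+1) =>
        have := hc m (by omega)
        show t m = false
        cases h : t m
        · rfl
        · exact absurd h this
    rw [hvan _ hzero] at ht
    exact absurd ht (by decide)
  obtain ⟨p, hpF, hp1⟩ := factory_ii hcl hfin he _ hWB hWm hpf k hWin
  exact target_mem hcl hfin he w hwB hwsd hwm p hpF hp1


end BCP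

open BCP

/-- There are exactly three Borel clones whose finitary restriction is the set of all
finitary self-dual monotone functions: all Borel self-dual monotone functions; all Borel
self-dual monotone functions vanishing near `0⃗` (equivalently, for self-dual `f`, equal
to `1` near `1⃗`); and all continuous self-dual monotone functions. -/
theorem borel_clones_over_DualMono :
    (∀ C ∈ [DM1, DM2, DM3], IsClone C ∧ C ⊆ BorelClass ∧
      finRes C = {f | finitary f ∧ SelfDual f ∧ Monotone f.2}) ∧
    List.Pairwise (· ≠ ·) [DM1, DM2, DM3] ∧
    (∀ f : BFun, SelfDual f → (VanishNearBot f ↔ OneNearTop f)) ∧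
    (∀ F : Set BFun, IsClone F → F ⊆ BorelClass →
      finRes F = {f | finitary f ∧ SelfDual f ∧ Monotone f.2} →
      F = DM1 ∨ F = DM2 ∨ F = DM3) := by
  refine ⟨?_, ?_, ?_, ?_⟩
  · intro C hC
    rcases List.mem_cons.1 hC with rfl | hC
    · exact ⟨isClone_DM1, fun f hf => hf.1, finRes_DM1⟩
    rcases List.mem_cons.1 hC with rfl | hC
    · exact ⟨isClone_DM2, fun f hf => hf.1, finRes_DM2⟩
    rcases List.mem_cons.1 hC with rfl | hC
    · exact ⟨isClone_DM3, fun f hf => (DM3_subset_DM2 hf).1, finRes_DM3⟩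
    · exact absurd hC List.not_mem_nil
  · rw [List.pairwise_cons, List.pairwise_cons, List.pairwise_cons]
    refine ⟨?_, ?_, ?_, List.Pairwise.nil⟩
    · intro b hb
      rcases List.mem_cons.1 hb with rfl | hb
      · exact DM1_ne_DM2
      rcases List.mem_cons.1 hb with rfl | hb
      · exact DM1_ne_DM3
      · exact absurd hb List.not_mem_nil
    · intro b hb
      rcases List.mem_cons.1 hb with rfl | hb
      · exact DM2_ne_DM3
      · exact absurd hb List.not_mem_nil
    · intro b hb
      exact absurd hb List.not_mem_nil
  · exact fun f hsd => vanish_iff_oneNearTop f hsd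
  · intro F hcl hB hfin
    have hfin' : finRes F = SMspec := hfin
    by_cases hcont : ∀ f ∈ F, IsContFun f
    · right; right
      apply Set.Subset.antisymm
      · intro f hf
        rcases f with ⟨b, w⟩
        exact ⟨hcont _ hf, F_sd hcl hfin' hf, F_mono hcl hfin' hf⟩
      · exact DM3_sub_F hcl hfin'
    · push_neg at hcont
      rcases hcont with ⟨f0, hf0F, hf0nc⟩
      obtain ⟨w0, hw0F, hw0nc⟩ : ∃ w0 : Pt → Bool,
          (⟨none, w0⟩ : BFun) ∈ F ∧ ¬ Continuous w0 := by
        rcases f0 with ⟨a, w⟩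
        cases a with
        | some n => exact absurd continuous_of_discreteTopology hf0nc
        | none => exact ⟨w, hf0F, hf0nc⟩
      have he := e_mem_of_discont hcl hfin' hw0F hw0nc
      by_cases hvan : ∀ f ∈ F, VanishNearBot f
      · right; left
        apply Set.Subset.antisymm
        · intro f hf
          rcases f with ⟨b, w⟩
          exact ⟨hB hf, F_sd hcl hfin' hf, F_mono hcl hfin' hf, hvan _ hf⟩
        · rintro ⟨a, w⟩ ⟨hgB, hgS, hgM, hgV⟩
          cases a with
          | some n => exact mem_of_fin hfin' n w hgS hgM
          | none => exact DM2_target hcl hfin' he w (measurable_of_mset hgB) hgS hgM hgV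
      · left
        push_neg at hvan
        rcases hvan with ⟨f1, hf1F, hf1nv⟩
        obtain ⟨w1, hw1F, hw1nv⟩ : ∃ w1 : Pt → Bool,
            (⟨none, w1⟩ : BFun) ∈ F ∧ ¬ VanishNearBot (⟨none, w1⟩ : BFun) := by
          rcases f1 with ⟨a, w⟩
          cases a with
          | some n =>
            exact absurd (vanish_of_cont _ continuous_of_discreteTopology
              (F_sd hcl hfin' hf1F) (F_mono hcl hfin' hf1F)) hf1nv
          | none => exact ⟨w, hf1F, hf1nv⟩
        have hw1nv' := vanish_translate (F_mono hcl hfin' hw1F) hw1nv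
        apply Set.Subset.antisymm
        · exact F_sub_DM1 hcl hB hfin'
        · rintro ⟨a, w⟩ ⟨hgB, hgS, hgM⟩
          cases a with
          | some n => exact mem_of_fin hfin' n w hgS hgM
          | none =>
            exact DM1_target hcl hfin' he w1 hw1F hw1nv' w (measurable_of_mset hgB) hgS hgM
end
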